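/- arXiv:2502.08280 — 4 statements merged into one kernel-verified Lean document; each statement's English description precedes it below -/
import Mathlib

section
/- Let ε₁,…,εₙ be real random variables with mean zero satisfying sup_s Σ_t |cov(ε_s, ε_t)| ≤ C₁ and sup_s Σ_{t,u,v} |cum(ε_s, ε_t, ε_u, ε_v)| ≤ C₂. Then for any real coefficients a₁,…,aₙ, E[(Σ_s a_s ε_s)⁴] ≤ 3 C₁² (Σ_s a_s²)² + C₂ Σ_s a_s⁴. -/
open MeasureTheory Finset

private lemma quad_abs (x y z w : ℝ) : |x*y*z*w| ≤ (x^4+y^4+z^4+w^4)/4 := by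
  rw [abs_mul, abs_mul, abs_mul]
  nlinarith [sq_nonneg ((|x|)*(|y|) - (|z|)*(|w|)), sq_nonneg (x^2-y^2), sq_nonneg (z^2-w^2),
    abs_nonneg x, abs_nonneg y, abs_nonneg z, abs_nonneg w,
    sq_abs x, sq_abs y, sq_abs z, sq_abs w, abs_nonneg (x*y), abs_nonneg (z*w)]

private lemma pair_abs (x y : ℝ) : |x*y| ≤ (x^2+y^2)/2 := by
  rw [abs_mul]
  nlinarith [sq_nonneg ((|x|) - (|y|)), sq_abs x, sq_abs y, abs_nonneg x, abs_neg y]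

private lemma key_sq {n : ℕ} (g : Fin n → Fin n → ℝ) :
    (∑ s, ∑ t, ∑ u, ∑ v, g s t * g u v) = (∑ s, ∑ t, g s t)^2 := by
  rw [sq, Finset.sum_mul]
  refine Finset.sum_congr rfl fun s _ => ?_
  rw [Finset.sum_mul]
  refine Finset.sum_congr rfl fun t _ => ?_
  rw [Finset.mul_sum]
  refine Finset.sum_congr rfl fun u _ => ?_
  rw [Finset.mul_sum]

private lemma sum3_rot {n : ℕ} (f : Fin n → Fin n → Fin n → ℝ) :
    ∑ a, ∑ b, ∑ c, f a b c = ∑ c, ∑ a, ∑ b, f a b c := by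
  have h1 : ∀ a, ∑ b, ∑ c, f a b c = ∑ c, ∑ b, f a b c := fun a => Finset.sum_comm
  simp only [h1]
  exact Finset.sum_comm

/-- For mean-zero errors with summed absolute covariances bounded by `C₁` and summed absolute
fourth joint cumulants bounded by `C₂`, `E[(Σ_s a_s ε_s)⁴] ≤ 3 C₁² (Σ_s a_s²)² + C₂ Σ_s a_s⁴`. -/
theorem stmt_3 {Ω : Type*} [MeasurableSpace Ω] (μ : Measure Ω) [IsProbabilityMeasure μ]
    (n : ℕ) (ε : Fin n → Ω → ℝ) (hmeas : ∀ s, Measurable (ε s))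
    (hint : ∀ s t u v : Fin n, Integrable (fun ω => ε s ω * ε t ω * ε u ω * ε v ω) μ)
    (hmean : ∀ s, ∫ ω, ε s ω ∂μ = 0)
    (C₁ C₂ : ℝ)
    (hcov : ∀ s : Fin n, ∑ t : Fin n, |∫ ω, ε s ω * ε t ω ∂μ| ≤ C₁)
    (hcum : ∀ s : Fin n,
      ∑ t : Fin n, ∑ u : Fin n, ∑ v : Fin n,
        |(∫ ω, ε s ω * ε t ω * ε u ω * ε v ω ∂μ)
          - (∫ ω, ε s ω * ε t ω ∂μ) * (∫ ω, ε u ω * ε v ω ∂μ)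
          - (∫ ω, ε s ω * ε u ω ∂μ) * (∫ ω, ε t ω * ε v ω ∂μ)
          - (∫ ω, ε s ω * ε v ω ∂μ) * (∫ ω, ε t ω * ε u ω ∂μ)| ≤ C₂)
    (a : Fin n → ℝ) :
    ∫ ω, (∑ s : Fin n, a s * ε s ω) ^ 4 ∂μ
      ≤ 3 * C₁ ^ 2 * (∑ s : Fin n, (a s) ^ 2) ^ 2 + C₂ * ∑ s : Fin n, (a s) ^ 4 := by
  classical
  set σ : Fin n → Fin n → ℝ := fun s t => ∫ ω, ε s ω * ε t ω ∂μ with hσdef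
  set m4 : Fin n → Fin n → Fin n → Fin n → ℝ :=
    fun s t u v => ∫ ω, ε s ω * ε t ω * ε u ω * ε v ω ∂μ with hmdef
  set κ : Fin n → Fin n → Fin n → Fin n → ℝ :=
    fun s t u v => m4 s t u v - σ s t * σ u v - σ s u * σ t v - σ s v * σ t u with hκdef
  have hcov' : ∀ s, ∑ t, |σ s t| ≤ C₁ := hcov
  have hcum' : ∀ s, ∑ t, ∑ u, ∑ v, |κ s t u v| ≤ C₂ := hcum
  have hσsym : ∀ s t, σ s t = σ t s := by
    intro s t; simp only [hσdef]; congr 1; funext ω; ring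
  have hmst : ∀ s t u v, m4 s t u v = m4 t s u v := by
    intro s t u v; simp only [hmdef]; congr 1; funext ω; ring
  have hmsu : ∀ s t u v, m4 s t u v = m4 u t s v := by
    intro s t u v; simp only [hmdef]; congr 1; funext ω; ring
  have hmsv : ∀ s t u v, m4 s t u v = m4 v t u s := by
    intro s t u v; simp only [hmdef]; congr 1; funext ω; ring
  have hκst : ∀ s t u v, κ s t u v = κ t s u v := by
    intro s t u v; simp only [hκdef]; rw [hmst s t u v, hσsym s t]; ring
  have hκsu : ∀ s t u v, κ s t u v = κ u t s v := by
    intro s t u v; simp only [hκdef]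
    rw [hmsu s t u v, hσsym s t, hσsym s u, hσsym t u]; ring
  have hκsv : ∀ s t u v, κ s t u v = κ v t u s := by
    intro s t u v; simp only [hκdef]
    rw [hmsv s t u v, hσsym s t, hσsym s u, hσsym s v, hσsym u v, hσsym t v]; ring
  -- expansion of the fourth power pointwise
  have hpt : ∀ ω, (∑ s : Fin n, a s * ε s ω)^4
      = ∑ s, ∑ t, ∑ u, ∑ v,
          (a s * a t * a u * a v) * (ε s ω * ε t ω * ε u ω * ε v ω) := by
    intro ω
    have h2 : (∑ s : Fin n, a s * ε s ω)^4
        = (∑ s, ∑ t, (a s * ε s ω) * (a t * ε t ω))^2 := by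
      rw [← Finset.sum_mul_sum]; ring
    rw [h2, ← key_sq]
    refine Finset.sum_congr rfl fun s _ => Finset.sum_congr rfl fun t _ =>
      Finset.sum_congr rfl fun u _ => Finset.sum_congr rfl fun v _ => by ring
  have hintg : ∀ s t u v : Fin n,
      Integrable (fun ω => (a s * a t * a u * a v) * (ε s ω * ε t ω * ε u ω * ε v ω)) μ :=
    fun s t u v => (hint s t u v).const_mul _
  have hexp : ∫ ω, (∑ s : Fin n, a s * ε s ω)^4 ∂μ
      = ∑ s, ∑ t, ∑ u, ∑ v, (a s * a t * a u * a v) * m4 s t u v := by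
    simp only [hpt]
    rw [integral_finset_sum _ (fun s _ => integrable_finset_sum _ (fun t _ =>
      integrable_finset_sum _ (fun u _ => integrable_finset_sum _ (fun v _ => hintg s t u v))))]
    refine Finset.sum_congr rfl fun s _ => ?_
    rw [integral_finset_sum _ (fun t _ =>
      integrable_finset_sum _ (fun u _ => integrable_finset_sum _ (fun v _ => hintg s t u v)))]
    refine Finset.sum_congr rfl fun t _ => ?_
    rw [integral_finset_sum _ (fun u _ => integrable_finset_sum _ (fun v _ => hintg s t u v))]
    refine Finset.sum_congr rfl fun u _ => ?_
    rw [integral_finset_sum _ (fun v _ => hintg s t u v)]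
    refine Finset.sum_congr rfl fun v _ => ?_
    rw [integral_const_mul]
  rw [hexp]
  set S := ∑ s, ∑ t, a s * a t * σ s t with hSdef
  set A2 := ∑ s : Fin n, (a s)^2 with hA2def
  have hterm : ∀ s t u v : Fin n, (a s * a t * a u * a v) * m4 s t u v
      = (a s * a t * a u * a v) * κ s t u v
        + (a s * a t * σ s t) * (a u * a v * σ u v)
        + (a s * a u * σ s u) * (a t * a v * σ t v)
        + (a s * a v * σ s v) * (a t * a u * σ t u) := by
    intro s t u v; simp only [hκdef]; ring
  simp only [hterm, Finset.sum_add_distrib]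
  -- pairing sums equal S^2
  have hp1 : (∑ s, ∑ t, ∑ u, ∑ v, (a s * a t * σ s t) * (a u * a v * σ u v)) = S^2 :=
    key_sq (fun p q => a p * a q * σ p q)
  have hp2 : (∑ s, ∑ t, ∑ u, ∑ v, (a s * a u * σ s u) * (a t * a v * σ t v)) = S^2 := by
    have h1 : ∀ s : Fin n, (∑ t, ∑ u, ∑ v, (a s * a u * σ s u) * (a t * a v * σ t v))
        = ∑ u, ∑ t, ∑ v, (a s * a u * σ s u) * (a t * a v * σ t v) := fun s => Finset.sum_comm
    simp only [h1]
    exact key_sq (fun p q => a p * a q * σ p q)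
  have hp3 : (∑ s, ∑ t, ∑ u, ∑ v, (a s * a v * σ s v) * (a t * a u * σ t u)) = S^2 := by
    have h1 : ∀ s : Fin n, (∑ t, ∑ u, ∑ v, (a s * a v * σ s v) * (a t * a u * σ t u))
        = ∑ v, ∑ t, ∑ u, (a s * a v * σ s v) * (a t * a u * σ t u) :=
      fun s => sum3_rot (fun t u v => (a s * a v * σ s v) * (a t * a u * σ t u))
    simp only [h1]
    exact key_sq (fun p q => a p * a q * σ p q)
  rw [hp1, hp2, hp3]
  -- bound on S
  have hA2 : (0:ℝ) ≤ A2 := Finset.sum_nonneg fun s _ => sq_nonneg _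
  have hT : (∑ s, ∑ t, |a s * a t * σ s t|) ≤ C₁ * A2 := by
    have step1 : (∑ s, ∑ t, |a s * a t * σ s t|)
        ≤ ∑ s, ∑ t, (((a s)^2/2) * |σ s t| + ((a t)^2/2) * |σ s t|) := by
      refine Finset.sum_le_sum fun s _ => Finset.sum_le_sum fun t _ => ?_
      rw [abs_mul]
      have := pair_abs (a s) (a t)
      nlinarith [abs_nonneg (σ s t), abs_nonneg (a s * a t)]
    refine step1.trans ?_
    simp only [Finset.sum_add_distrib]
    have b1 : (∑ s, ∑ t, ((a s)^2/2) * |σ s t|) ≤ C₁ * A2 / 2 := by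
      have h1 : ∀ s : Fin n, (∑ t, ((a s)^2/2) * |σ s t|) = ((a s)^2/2) * ∑ t, |σ s t| := by
        intro s; simp only [← Finset.mul_sum]
      simp only [h1]
      calc (∑ s, ((a s)^2/2) * ∑ t, |σ s t|) ≤ ∑ s, ((a s)^2/2) * C₁ :=
            Finset.sum_le_sum fun s _ => mul_le_mul_of_nonneg_left (hcov' s) (by positivity)
        _ = C₁ * A2 / 2 := by rw [hA2def, ← Finset.sum_mul, ← Finset.sum_div]; ring
    have b2 : (∑ s, ∑ t, ((a t)^2/2) * |σ s t|) ≤ C₁ * A2 / 2 := by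
      rw [Finset.sum_comm]
      have h1 : ∀ t : Fin n, (∑ s, ((a t)^2/2) * |σ s t|) = ((a t)^2/2) * ∑ s, |σ s t| := by
        intro t; simp only [← Finset.mul_sum]
      simp only [h1]
      have hb : ∀ t : Fin n, (∑ s, |σ s t|) ≤ C₁ := by
        intro t
        have h2 : ∀ s : Fin n, |σ s t| = |σ t s| := fun s => by rw [hσsym]
        simp only [h2]
        exact hcov' t
      calc (∑ t, ((a t)^2/2) * ∑ s, |σ s t|) ≤ ∑ t, ((a t)^2/2) * C₁ :=
            Finset.sum_le_sum fun t _ => mul_le_mul_of_nonneg_left (hb t) (by positivity)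
        _ = C₁ * A2 / 2 := by rw [hA2def, ← Finset.sum_mul, ← Finset.sum_div]; ring
    linarith
  have hSabs : |S| ≤ C₁ * A2 := by
    calc |S| ≤ ∑ s, |∑ t, a s * a t * σ s t| := Finset.abs_sum_le_sum_abs _ _
      _ ≤ ∑ s, ∑ t, |a s * a t * σ s t| :=
          Finset.sum_le_sum fun s _ => Finset.abs_sum_le_sum_abs _ _
      _ ≤ C₁ * A2 := hT
  have hS2 : S^2 ≤ C₁^2 * A2^2 := by
    have h := mul_le_mul hSabs hSabs (abs_nonneg S) ((abs_nonneg S).trans hSabs)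
    nlinarith [sq_abs S]
  -- cumulant bound
  have hT1 : (∑ s, ∑ t, ∑ u, ∑ v, (a s)^4 * |κ s t u v|) ≤ C₂ * ∑ s : Fin n, (a s)^4 := by
    have h1 : ∀ s : Fin n, (∑ t, ∑ u, ∑ v, (a s)^4 * |κ s t u v|)
        = (a s)^4 * ∑ t, ∑ u, ∑ v, |κ s t u v| := by
      intro s; simp only [← Finset.mul_sum]
    simp only [h1]
    calc (∑ s, (a s)^4 * ∑ t, ∑ u, ∑ v, |κ s t u v|) ≤ ∑ s, (a s)^4 * C₂ :=
          Finset.sum_le_sum fun s _ => mul_le_mul_of_nonneg_left (hcum' s) (by positivity)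
      _ = C₂ * ∑ s : Fin n, (a s)^4 := by rw [← Finset.sum_mul]; ring
  have hT2 : (∑ s, ∑ t, ∑ u, ∑ v, (a t)^4 * |κ s t u v|) ≤ C₂ * ∑ s : Fin n, (a s)^4 := by
    have e : (∑ s, ∑ t, ∑ u, ∑ v, (a t)^4 * |κ s t u v|)
        = ∑ t, ∑ s, ∑ u, ∑ v, (a t)^4 * |κ t s u v| := by
      rw [Finset.sum_comm]
      exact Finset.sum_congr rfl fun t _ => Finset.sum_congr rfl fun s _ =>
        Finset.sum_congr rfl fun u _ => Finset.sum_congr rfl fun v _ => by rw [hκst]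
    rw [e]
    have h1 : ∀ t : Fin n, (∑ s, ∑ u, ∑ v, (a t)^4 * |κ t s u v|)
        = (a t)^4 * ∑ s, ∑ u, ∑ v, |κ t s u v| := by
      intro t; simp only [← Finset.mul_sum]
    simp only [h1]
    calc (∑ t, (a t)^4 * ∑ s, ∑ u, ∑ v, |κ t s u v|) ≤ ∑ t, (a t)^4 * C₂ :=
          Finset.sum_le_sum fun t _ => mul_le_mul_of_nonneg_left (hcum' t) (by positivity)
      _ = C₂ * ∑ s : Fin n, (a s)^4 := by rw [← Finset.sum_mul]; ring
  have hT3 : (∑ s, ∑ t, ∑ u, ∑ v, (a u)^4 * |κ s t u v|) ≤ C₂ * ∑ s : Fin n, (a s)^4 := by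
    have e : (∑ s, ∑ t, ∑ u, ∑ v, (a u)^4 * |κ s t u v|)
        = ∑ u, ∑ t, ∑ s, ∑ v, (a u)^4 * |κ u t s v| := by
      rw [sum3_rot (fun s t u => ∑ v, (a u)^4 * |κ s t u v|)]
      refine Finset.sum_congr rfl fun u _ => ?_
      rw [Finset.sum_comm]
      exact Finset.sum_congr rfl fun t _ => Finset.sum_congr rfl fun s _ =>
        Finset.sum_congr rfl fun v _ => by rw [hκsu]
    rw [e]
    have h1 : ∀ u : Fin n, (∑ t, ∑ s, ∑ v, (a u)^4 * |κ u t s v|)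
        = (a u)^4 * ∑ t, ∑ s, ∑ v, |κ u t s v| := by
      intro u; simp only [← Finset.mul_sum]
    simp only [h1]
    calc (∑ u, (a u)^4 * ∑ t, ∑ s, ∑ v, |κ u t s v|) ≤ ∑ u, (a u)^4 * C₂ :=
          Finset.sum_le_sum fun u _ => mul_le_mul_of_nonneg_left (hcum' u) (by positivity)
      _ = C₂ * ∑ s : Fin n, (a s)^4 := by rw [← Finset.sum_mul]; ring
  have hT4 : (∑ s, ∑ t, ∑ u, ∑ v, (a v)^4 * |κ s t u v|) ≤ C₂ * ∑ s : Fin n, (a s)^4 := by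
    have e : (∑ s, ∑ t, ∑ u, ∑ v, (a v)^4 * |κ s t u v|)
        = ∑ v, ∑ t, ∑ u, ∑ s, (a v)^4 * |κ v t u s| := by
      have h1 : ∀ s : Fin n, (∑ t, ∑ u, ∑ v, (a v)^4 * |κ s t u v|)
          = ∑ v, ∑ t, ∑ u, (a v)^4 * |κ s t u v| :=
        fun s => sum3_rot (fun t u v => (a v)^4 * |κ s t u v|)
      simp only [h1]
      rw [Finset.sum_comm]
      refine Finset.sum_congr rfl fun v _ => ?_
      calc (∑ s, ∑ t, ∑ u, (a v)^4 * |κ s t u v|)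
          = ∑ s, ∑ t, ∑ u, (a v)^4 * |κ v t u s| :=
            Finset.sum_congr rfl fun s _ => Finset.sum_congr rfl fun t _ =>
              Finset.sum_congr rfl fun u _ => by rw [hκsv]
        _ = ∑ t, ∑ u, ∑ s, (a v)^4 * |κ v t u s| :=
            (sum3_rot (fun t u s => (a v)^4 * |κ v t u s|)).symm
    rw [e]
    have h1 : ∀ v : Fin n, (∑ t, ∑ u, ∑ s, (a v)^4 * |κ v t u s|)
        = (a v)^4 * ∑ t, ∑ u, ∑ s, |κ v t u s| := by
      intro v; simp only [← Finset.mul_sum]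
    simp only [h1]
    calc (∑ v, (a v)^4 * ∑ t, ∑ u, ∑ s, |κ v t u s|) ≤ ∑ v, (a v)^4 * C₂ :=
          Finset.sum_le_sum fun v _ => mul_le_mul_of_nonneg_left (hcum' v) (by positivity)
      _ = C₂ * ∑ s : Fin n, (a s)^4 := by rw [← Finset.sum_mul]; ring
  have hK : (∑ s, ∑ t, ∑ u, ∑ v, (a s * a t * a u * a v) * κ s t u v)
      ≤ C₂ * ∑ s : Fin n, (a s)^4 := by
    have step1 : (∑ s, ∑ t, ∑ u, ∑ v, (a s * a t * a u * a v) * κ s t u v)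
        ≤ ∑ s, ∑ t, ∑ u, ∑ v,
            (((a s)^4 * |κ s t u v| + (a t)^4 * |κ s t u v|
              + (a u)^4 * |κ s t u v| + (a v)^4 * |κ s t u v|)/4) := by
      refine Finset.sum_le_sum fun s _ => Finset.sum_le_sum fun t _ =>
        Finset.sum_le_sum fun u _ => Finset.sum_le_sum fun v _ => ?_
      have h1 : (a s * a t * a u * a v) * κ s t u v ≤ |a s * a t * a u * a v| * |κ s t u v| := by
        rw [← abs_mul]; exact le_abs_self _
      have h2 := mul_le_mul_of_nonneg_right (quad_abs (a s) (a t) (a u) (a v))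
        (abs_nonneg (κ s t u v))
      calc (a s * a t * a u * a v) * κ s t u v ≤ |a s * a t * a u * a v| * |κ s t u v| := h1
        _ ≤ ((a s)^4+(a t)^4+(a u)^4+(a v)^4)/4 * |κ s t u v| := h2
        _ = _ := by ring
    refine step1.trans ?_
    simp only [← Finset.sum_div, Finset.sum_add_distrib]
    linarith [hT1, hT2, hT3, hT4]
  linarith [hS2, hK]
end

section
/- Let θ₁,…,θ_N ∈ ℝ satisfy (1/N) Σ_k |θ_k| ≤ ε₀ q (1+δ), and suppose each observation Y_k = θ_k + ε_k with P(|ε_k| > x) ≤ (ε₀/x)⁴ for all x > 0. Let θ̂_k = T̂(Y_k) be a thresholding estimator with threshold t = K ε₀ q^{−1/3} (i.e. T̂(y) = 0 if |y| < t and |T̂(y) − y| ≤ t otherwise). Then (1/N) Σ_k E[(θ̂_k − θ_k)²] ≤ C(K, δ) ε₀² q^{2/3} for a constant C(K, δ) not depending on N, ε₀, q, or the θ_k. -/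
open MeasureTheory Finset
open scoped ENNReal

lemma geom_aux (m : ℕ) : (4:ℝ)^(m+1) ≤ ∑ j ∈ Finset.range (m+1), (4:ℝ)^(j+1) := by
  induction m with
  | zero => simp
  | succ k ih =>
    rw [Finset.sum_range_succ]
    have h : (0:ℝ) < 4 ^ (k+1) := by positivity
    have : (4:ℝ)^(k+1+1) = 4 * 4^(k+1) := by ring
    nlinarith [ih]

lemma pointwise_bound (t θ e : ℝ) (T : ℝ → ℝ) (ht : 0 < t)
    (h0 : ∀ y : ℝ, |y| < t → T y = 0) (h1 : ∀ y : ℝ, t ≤ |y| → |T y - y| ≤ t) :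
    (T (θ + e) - θ)^2 ≤ 6*t*|θ| + 9 * (if t/2 ≤ |e| then e^2 else 0) := by
  have hifnn : (0:ℝ) ≤ (if t/2 ≤ |e| then e^2 else 0) := by positivity
  have habsθ : 0 ≤ |θ| := abs_nonneg θ
  have habse : 0 ≤ |e| := abs_nonneg e
  have hsqθ : θ^2 = |θ| * |θ| := by rw [← sq_abs]; ring
  have hsqe : e^2 = |e| * |e| := by rw [← sq_abs]; ring
  by_cases hYt : |θ + e| < t
  · rw [h0 _ hYt]
    have habs : |θ| ≤ |θ + e| + |e| := by
      have : θ = (θ + e) - e := by ring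
      calc |θ| = |(θ + e) - e| := by rw [← this]
        _ ≤ |θ + e| + |e| := abs_sub _ _
    by_cases he : t/2 ≤ |e|
    · rw [if_pos he]
      by_cases hθ : |θ| ≤ t/2
      · nlinarith
      · push_neg at hθ
        nlinarith
    · rw [if_neg he]
      push_neg at he
      by_cases hθ : |θ| ≤ t/2
      · nlinarith
      · push_neg at hθ
        nlinarith
  · push_neg at hYt
    have hTy := h1 _ hYt
    have herr : |T (θ + e) - θ| ≤ t + |e| := by
      calc |T (θ + e) - θ| = |(T (θ + e) - (θ + e)) + e| := by ring_nf
        _ ≤ |T (θ + e) - (θ + e)| + |e| := abs_add_le _ _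
        _ ≤ t + |e| := by linarith
    have herr2 : (T (θ + e) - θ)^2 ≤ (t + |e|)^2 := by
      have h := abs_nonneg (T (θ + e) - θ)
      nlinarith [sq_abs (T (θ + e) - θ)]
    by_cases he : t/2 ≤ |e|
    · rw [if_pos he]
      by_cases hθ : |θ| ≤ t/2
      · nlinarith
      · push_neg at hθ
        nlinarith
    · rw [if_neg he]
      push_neg at he
      have hθ : t/2 ≤ |θ| := by
        have : |θ + e| - |e| ≤ |θ| := by
          have := abs_sub_abs_le_abs_sub (θ + e) e
          simpa using this
        linarith
      nlinarith

lemma tail_int {Ω : Type} [MeasurableSpace Ω] (μ : Measure Ω) (f : Ω → ℝ)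
    (hf : Measurable f) {ε₀ a : ℝ} (hε₀ : 0 < ε₀) (ha : 0 < a)
    (htail : ∀ x : ℝ, 0 < x → μ {ω | x < |f ω|} ≤ ENNReal.ofReal ((ε₀ / x) ^ 4)) :
    ∫⁻ ω, ENNReal.ofReal (if a ≤ |f ω| then f ω ^ 2 else 0) ∂μ
      ≤ ENNReal.ofReal (86 * (ε₀ ^ 4 / a ^ 2)) := by
  classical
  set F : ℕ → Ω → ℝ≥0∞ := fun j =>
    Set.indicator {ω | 2 ^ j * a / 2 < |f ω|} (fun _ => ENNReal.ofReal ((4:ℝ) ^ (j+1) * a ^ 2))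
    with hF
  have hmeasS : ∀ j : ℕ, MeasurableSet {ω | (2:ℝ) ^ j * a / 2 < |f ω|} := fun j =>
    measurableSet_lt measurable_const hf.abs
  have hptwise : ∀ ω, ENNReal.ofReal (if a ≤ |f ω| then f ω ^ 2 else 0) ≤ ∑' j, F j ω := by
    intro ω
    by_cases h : a ≤ |f ω|
    · have hex : ∃ n : ℕ, |f ω| < 2 ^ (n+1) * a := by
        obtain ⟨n, hn⟩ := pow_unbounded_of_one_lt (|f ω| / a) (one_lt_two (α := ℝ))
        refine ⟨n, ?_⟩
        have : |f ω| < 2 ^ n * a := by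
          rw [div_lt_iff₀ ha] at hn; linarith
        have h2 : (2:ℝ) ^ n ≤ 2 ^ (n+1) := by
          apply pow_le_pow_right₀ (by norm_num); omega
        nlinarith
      set m := Nat.find hex with hm_def
      have hm : |f ω| < 2 ^ (m+1) * a := Nat.find_spec hex
      have hlow : 2 ^ m * a ≤ |f ω| := by
        rcases Nat.eq_zero_or_pos m with h0 | h0
        · rw [h0]; simpa using h
        · have hmin := Nat.find_min hex (show m - 1 < m from Nat.sub_lt h0 one_pos)
          push_neg at hmin
          have : m - 1 + 1 = m := Nat.succ_pred_eq_of_pos h0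
          rwa [this] at hmin
      have key : ENNReal.ofReal (f ω ^ 2) ≤ ∑ j ∈ Finset.range (m+1), F j ω := by
        have hind : ∀ j ∈ Finset.range (m+1),
            F j ω = ENNReal.ofReal ((4:ℝ)^(j+1) * a^2) := by
          intro j hj
          have hj' : j ≤ m := Nat.lt_succ_iff.mp (Finset.mem_range.mp hj)
          have hlt : (2:ℝ)^j * a / 2 < |f ω| := by
            have h1 : (2:ℝ)^j ≤ 2^m := pow_le_pow_right₀ (by norm_num) hj'
            have h2 : (0:ℝ) < 2^m := by positivity
            nlinarith
          exact Set.indicator_of_mem hlt (fun _ => ENNReal.ofReal ((4:ℝ)^(j+1) * a^2))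
        rw [Finset.sum_congr rfl hind,
          ← ENNReal.ofReal_sum_of_nonneg (fun j _ => by positivity)]
        apply ENNReal.ofReal_le_ofReal
        have hb2 : ((2:ℝ)^(m+1))^2 = 4^(m+1) := by
          rw [← pow_mul, mul_comm, pow_mul]; norm_num
        have hub : f ω ^ 2 ≤ (4:ℝ)^(m+1) * a^2 := by
          have h1 := mul_le_mul hm.le hm.le (abs_nonneg (f ω)) (by positivity)
          nlinarith [sq_abs (f ω)]
        calc f ω ^2 ≤ (4:ℝ)^(m+1)*a^2 := hub
          _ ≤ (∑ j ∈ Finset.range (m+1), (4:ℝ)^(j+1)) * a^2 := by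
              nlinarith [geom_aux m, sq_nonneg a]
          _ = ∑ j ∈ Finset.range (m+1), (4:ℝ)^(j+1) * a^2 := by rw [Finset.sum_mul]
      rw [if_pos h]
      exact key.trans (ENNReal.sum_le_tsum _)
    · rw [if_neg h]
      simp
  have hFj : ∀ j : ℕ, ∫⁻ ω, F j ω ∂μ ≤ ENNReal.ofReal (64 * (ε₀^4/a^2) * (1/4)^j) := by
    intro j
    rw [hF, lintegral_indicator_const (hmeasS j)]
    have hx : (0:ℝ) < 2^j * a / 2 := by positivity
    calc _ ≤ ENNReal.ofReal ((4:ℝ)^(j+1) * a^2) * ENNReal.ofReal ((ε₀ / (2^j*a/2))^4) :=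
          mul_le_mul_right (htail _ hx) _
      _ = ENNReal.ofReal ((4:ℝ)^(j+1) * a^2 * (ε₀/(2^j*a/2))^4) :=
          (ENNReal.ofReal_mul (by positivity)).symm
      _ = ENNReal.ofReal (64 * (ε₀^4/a^2) * (1/4)^j) := by
          congr 1
          have h4 : (4:ℝ)^j = ((2:ℝ)^j)^2 := by rw [← pow_mul, mul_comm, pow_mul]; norm_num
          have h14 : ((1:ℝ)/4)^j = (((2:ℝ)^j)^2)⁻¹ := by
            rw [← h4, div_pow, one_pow, one_div]
          have h2j : (0:ℝ) < (2:ℝ)^j := by positivity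
          rw [h14, pow_succ, h4]
          field_simp
          ring
  have hsummable : Summable (fun j : ℕ => 64 * (ε₀^4/a^2) * (1/4:ℝ)^j) :=
    (summable_geometric_of_lt_one (by norm_num) (by norm_num)).mul_left _
  calc ∫⁻ ω, ENNReal.ofReal (if a ≤ |f ω| then f ω ^ 2 else 0) ∂μ
      ≤ ∫⁻ ω, ∑' j, F j ω ∂μ := lintegral_mono hptwise
    _ = ∑' j, ∫⁻ ω, F j ω ∂μ :=
        lintegral_tsum (fun j => (measurable_const.indicator (hmeasS j)).aemeasurable)
    _ ≤ ∑' j, ENNReal.ofReal (64 * (ε₀^4/a^2) * (1/4:ℝ)^j) := ENNReal.tsum_le_tsum hFj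
    _ = ENNReal.ofReal (∑' j, 64 * (ε₀^4/a^2) * (1/4:ℝ)^j) :=
        (ENNReal.ofReal_tsum_of_nonneg (fun j => by positivity) hsummable).symm
    _ ≤ ENNReal.ofReal (86 * (ε₀ ^ 4 / a ^ 2)) := by
        apply ENNReal.ofReal_le_ofReal
        rw [tsum_mul_left, tsum_geometric_of_lt_one (by norm_num) (by norm_num)]
        have hnn : (0:ℝ) ≤ ε₀^4/a^2 := by positivity
        nlinarith

lemma arith_aux (K ε₀ q δ : ℝ) (hK : 0 < K) (hε₀ : 0 < ε₀) (hq : 0 < q) :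
    6*(K * ε₀ * q ^ (-(1:ℝ)/3))*(ε₀*q*(1+δ))
      + 774*(ε₀^4/((K * ε₀ * q ^ (-(1:ℝ)/3))/2)^2)
    = (6*K*(1+δ) + 3096/K^2) * ε₀^2 * q^((2:ℝ)/3) := by
  have hr : (0:ℝ) < q ^ ((1:ℝ)/3) := Real.rpow_pos_of_pos hq _
  have htq : q ^ (-(1:ℝ)/3) = (q ^ ((1:ℝ)/3))⁻¹ := by
    rw [neg_div, Real.rpow_neg hq.le]
  set r := q ^ ((1:ℝ)/3) with hr_def
  have h2 : q^((2:ℝ)/3) = r^2 := by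
    rw [hr_def, ← Real.rpow_natCast (q ^ ((1:ℝ)/3)) 2, ← Real.rpow_mul hq.le]
    norm_num
  have h3 : q = r^3 := by
    rw [hr_def, ← Real.rpow_natCast (q ^ ((1:ℝ)/3)) 3, ← Real.rpow_mul hq.le]
    norm_num
  rw [htq, h2]
  rw [h3]
  have hrne : r ≠ 0 := ne_of_gt hr
  field_simp
  ring

/-- Sparse-mean estimation with thresholding at `t = K ε₀ q^{−1/3}` under a fourth-order
polynomial tail bound on the (not necessarily independent) errors: the averaged risk is bounded
by `C(K,δ) ε₀² q^{2/3}`, with a constant depending only on `K` and `δ`. -/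
theorem stmt_8 (K δ : ℝ) (hK : 0 < K) (hδ : 0 < δ) :
    ∃ C : ℝ, 0 < C ∧
      ∀ (Ω : Type) (_ : MeasurableSpace Ω) (μ : Measure Ω), IsProbabilityMeasure μ →
        ∀ (N : ℕ), 0 < N →
          ∀ (ε₀ q : ℝ), 0 < ε₀ → 0 < q → q < 1 →
            ∀ (θ : Fin N → ℝ),
              (1 / (N : ℝ)) * ∑ k : Fin N, |θ k| ≤ ε₀ * q * (1 + δ) →
              ∀ (ε : Fin N → Ω → ℝ), (∀ k, Measurable (ε k)) →
                (∀ (k : Fin N) (x : ℝ), 0 < x →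
                  μ {ω | x < |ε k ω|} ≤ ENNReal.ofReal ((ε₀ / x) ^ 4)) →
                ∀ (T : ℝ → ℝ),
                  (∀ y : ℝ, |y| < K * ε₀ * q ^ (-(1 : ℝ) / 3) → T y = 0) →
                  (∀ y : ℝ, K * ε₀ * q ^ (-(1 : ℝ) / 3) ≤ |y| →
                    |T y - y| ≤ K * ε₀ * q ^ (-(1 : ℝ) / 3)) →
                  (1 / (N : ℕ) : ENNReal) *
                      ∑ k : Fin N,
                        ∫⁻ ω, ENNReal.ofReal ((T (θ k + ε k ω) - θ k) ^ 2) ∂μ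
                    ≤ ENNReal.ofReal (C * ε₀ ^ 2 * q ^ ((2 : ℝ) / 3)) := by
  refine ⟨6*K*(1+δ) + 3096/K^2, by positivity, ?_⟩
  intro Ω _ μ hμ N hN ε₀ q hε₀ hq hq1 θ hθ ε hεm htail T hT0 hT1
  have hrq : (0:ℝ) < q ^ (-(1:ℝ)/3) := Real.rpow_pos_of_pos hq _
  set t := K * ε₀ * q ^ (-(1:ℝ)/3) with ht_def
  have ht : 0 < t := by positivity
  -- per-k bound
  have hk : ∀ k : Fin N,
      ∫⁻ ω, ENNReal.ofReal ((T (θ k + ε k ω) - θ k)^2) ∂μ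
        ≤ ENNReal.ofReal (6*t*|θ k|) + ENNReal.ofReal (774 * (ε₀^4/(t/2)^2)) := by
    intro k
    have hpt : ∀ ω, ENNReal.ofReal ((T (θ k + ε k ω) - θ k)^2)
        ≤ ENNReal.ofReal (6*t*|θ k|)
          + ENNReal.ofReal 9 * ENNReal.ofReal (if t/2 ≤ |ε k ω| then (ε k ω)^2 else 0) := by
      intro ω
      have hb := pointwise_bound t (θ k) (ε k ω) T ht hT0 hT1
      calc ENNReal.ofReal ((T (θ k + ε k ω) - θ k)^2)
          ≤ ENNReal.ofReal (6*t*|θ k| + 9 * (if t/2 ≤ |ε k ω| then (ε k ω)^2 else 0)) :=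
            ENNReal.ofReal_le_ofReal hb
        _ = _ := by
            rw [ENNReal.ofReal_add (mul_nonneg (mul_nonneg (by norm_num) ht.le) (abs_nonneg _))
              (by positivity),
              ENNReal.ofReal_mul (show (0:ℝ) ≤ 9 by norm_num)]
    calc ∫⁻ ω, ENNReal.ofReal ((T (θ k + ε k ω) - θ k)^2) ∂μ
        ≤ ∫⁻ ω, (ENNReal.ofReal (6*t*|θ k|)
            + ENNReal.ofReal 9 * ENNReal.ofReal (if t/2 ≤ |ε k ω| then (ε k ω)^2 else 0)) ∂μ :=
          lintegral_mono hpt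
      _ = ENNReal.ofReal (6*t*|θ k|) * μ Set.univ
          + ENNReal.ofReal 9 * ∫⁻ ω, ENNReal.ofReal (if t/2 ≤ |ε k ω| then (ε k ω)^2 else 0) ∂μ := by
          rw [lintegral_add_left measurable_const, lintegral_const,
            lintegral_const_mul' _ _ ENNReal.ofReal_ne_top]
      _ ≤ ENNReal.ofReal (6*t*|θ k|) + ENNReal.ofReal 9 * ENNReal.ofReal (86 * (ε₀^4/(t/2)^2)) := by
          rw [measure_univ, mul_one]
          exact add_le_add_right
            (mul_le_mul_right (tail_int μ (ε k) (hεm k) hε₀ (by positivity) (htail k)) _) _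
      _ = ENNReal.ofReal (6*t*|θ k|) + ENNReal.ofReal (774 * (ε₀^4/(t/2)^2)) := by
          rw [← ENNReal.ofReal_mul (by norm_num)]
          congr 2
          ring
  have hθ' : ∑ k : Fin N, |θ k| ≤ (N:ℝ) * (ε₀*q*(1+δ)) := by
    have hN' : (0:ℝ) < N := by exact_mod_cast hN
    have := mul_le_mul_of_nonneg_left hθ hN'.le
    rw [← mul_assoc, mul_one_div, div_self (ne_of_gt hN'), one_mul] at this
    linarith
  have hsum : ∑ k : Fin N, ∫⁻ ω, ENNReal.ofReal ((T (θ k + ε k ω) - θ k)^2) ∂μ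
      ≤ (N : ℝ≥0∞) * ENNReal.ofReal ((6*K*(1+δ) + 3096/K^2) * ε₀^2 * q^((2:ℝ)/3)) := by
    calc ∑ k : Fin N, ∫⁻ ω, ENNReal.ofReal ((T (θ k + ε k ω) - θ k)^2) ∂μ
        ≤ ∑ k : Fin N, (ENNReal.ofReal (6*t*|θ k|) + ENNReal.ofReal (774 * (ε₀^4/(t/2)^2))) :=
          Finset.sum_le_sum (fun k _ => hk k)
      _ = (∑ k : Fin N, ENNReal.ofReal (6*t*|θ k|))
          + (N:ℝ≥0∞) * ENNReal.ofReal (774 * (ε₀^4/(t/2)^2)) := by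
          rw [Finset.sum_add_distrib, Finset.sum_const, Finset.card_univ, Fintype.card_fin,
            nsmul_eq_mul]
      _ ≤ ENNReal.ofReal ((N:ℝ) * (6*t*(ε₀*q*(1+δ))))
          + (N:ℝ≥0∞) * ENNReal.ofReal (774*(ε₀^4/(t/2)^2)) := by
          apply add_le_add_left
          rw [← ENNReal.ofReal_sum_of_nonneg (fun k _ => by positivity)]
          apply ENNReal.ofReal_le_ofReal
          calc ∑ k : Fin N, 6*t*|θ k| = 6*t*∑ k : Fin N, |θ k| := by rw [Finset.mul_sum]
            _ ≤ 6*t*((N:ℝ)*(ε₀*q*(1+δ))) := by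
                apply mul_le_mul_of_nonneg_left hθ' (by positivity)
            _ = (N:ℝ)*(6*t*(ε₀*q*(1+δ))) := by ring
      _ = (N:ℝ≥0∞) * (ENNReal.ofReal (6*t*(ε₀*q*(1+δ)))
          + ENNReal.ofReal (774*(ε₀^4/(t/2)^2))) := by
          rw [ENNReal.ofReal_mul (by positivity), ENNReal.ofReal_natCast]
          ring
      _ = (N:ℝ≥0∞) * ENNReal.ofReal (6*t*(ε₀*q*(1+δ)) + 774*(ε₀^4/(t/2)^2)) := by
          rw [ENNReal.ofReal_add (by positivity) (by positivity)]
      _ = (N:ℝ≥0∞) * ENNReal.ofReal ((6*K*(1+δ) + 3096/K^2) * ε₀^2 * q^((2:ℝ)/3)) := by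
          rw [ht_def, arith_aux K ε₀ q δ hK hε₀ hq]
  have hNne : ((N:ℕ) : ℝ≥0∞) ≠ 0 := Nat.cast_ne_zero.mpr hN.ne'
  calc (1 / (N : ℕ) : ENNReal) * ∑ k : Fin N, ∫⁻ ω, ENNReal.ofReal ((T (θ k + ε k ω) - θ k) ^ 2) ∂μ
      ≤ (1 / (N : ℕ) : ENNReal) *
        ((N : ℝ≥0∞) * ENNReal.ofReal ((6*K*(1+δ) + 3096/K^2) * ε₀^2 * q^((2:ℝ)/3))) :=
        mul_le_mul_right hsum _
    _ = ENNReal.ofReal ((6*K*(1+δ) + 3096/K^2) * ε₀^2 * q^((2:ℝ)/3)) := by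
        rw [one_div, ← mul_assoc, ENNReal.inv_mul_cancel hNne (ENNReal.natCast_ne_top N), one_mul]
end

section
/- The index set 𝓘_n = {(j,k) : j ≥ 0, 1 ≤ k ≤ 2^j, n_{j+1,2k−1} ≥ 1 and n_{j+1,2k} ≥ 1} has cardinality exactly n − 1. -/
open Finset

/-- The number of sample points `x_t = t/n`, `1 ≤ t ≤ n`, lying in the dyadic interval
`I_{j,k} = ((k−1)2^{−j}, k 2^{−j}]`. -/
noncomputable def cnt (n j k : ℕ) : ℕ :=
  ((Finset.Icc 1 n).filter
    (fun t : ℕ => ((k : ℝ) - 1) / 2 ^ j < (t : ℝ) / n ∧ (t : ℝ) / n ≤ (k : ℝ) / 2 ^ j)).card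

namespace Stmt14

/-- Ceiling division `⌈a / m⌉` on naturals. -/
def ceilN (a m : ℕ) : ℕ := (a + m - 1) / m

lemma ceilN_le {m : ℕ} (hm : 0 < m) {a k : ℕ} : ceilN a m ≤ k ↔ a ≤ k * m := by
  unfold ceilN
  rw [Nat.div_le_iff_le_mul_add_pred hm, Nat.mul_comm]
  omega

lemma le_ceilN {m : ℕ} (hm : 0 < m) {a k : ℕ} (hk : 1 ≤ k) :
    k ≤ ceilN a m ↔ (k - 1) * m < a := by
  have h := ceilN_le hm (a := a) (k := k - 1)
  omega

lemma ceilN_ext {c d : ℕ} (h : ∀ k, c ≤ k ↔ d ≤ k) : c = d :=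
  le_antisymm ((h d).mpr le_rfl) ((h c).mp le_rfl)

lemma ceilN_mul {m₁ m₂ : ℕ} (h1 : 0 < m₁) (h2 : 0 < m₂) (a : ℕ) :
    ceilN a (m₁ * m₂) = ceilN (ceilN a m₁) m₂ := by
  apply ceilN_ext; intro k
  rw [ceilN_le (Nat.mul_pos h1 h2), ceilN_le h2, ceilN_le h1,
    show k * m₂ * m₁ = k * (m₁ * m₂) by ring]

lemma ceilN_mul_right {m c : ℕ} (h1 : 0 < m) (h2 : 0 < c) (a : ℕ) :
    ceilN (a * c) (m * c) = ceilN a m := by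
  apply ceilN_ext; intro k
  rw [ceilN_le (Nat.mul_pos h1 h2), ceilN_le h1,
    show k * (m * c) = (k * m) * c by ring]
  exact ⟨fun h => Nat.le_of_mul_le_mul_right h h2, fun h => Nat.mul_le_mul_right c h⟩

/-- `K n j t` is the index `k` of the dyadic interval `I_{j,k}` containing `t/n`. -/
def K (n j t : ℕ) : ℕ := ceilN (t * 2 ^ j) n

lemma K_eq_iff {n j t k : ℕ} (hn : 0 < n) (hk : 1 ≤ k) :
    K n j t = k ↔ (k - 1) * n < t * 2 ^ j ∧ t * 2 ^ j ≤ k * n := by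
  have h1 := ceilN_le hn (a := t * 2 ^ j) (k := k)
  have h2 := le_ceilN hn (a := t * 2 ^ j) hk
  unfold K
  omega

lemma K_pos {n j t : ℕ} (hn : 0 < n) (ht : 1 ≤ t) : 1 ≤ K n j t := by
  unfold K
  rw [le_ceilN hn le_rfl]
  simpa using Nat.mul_pos ht (Nat.two_pow_pos j)

lemma K_le_pow {n j t : ℕ} (hn : 0 < n) (htn : t ≤ n) : K n j t ≤ 2 ^ j := by
  unfold K
  rw [ceilN_le hn, Nat.mul_comm (2 ^ j) n]
  exact Nat.mul_le_mul_right _ htn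

lemma K_mono {n j t t' : ℕ} (hn : 0 < n) (h : t ≤ t') : K n j t ≤ K n j t' := by
  unfold K
  rw [ceilN_le hn]
  exact le_trans (Nat.mul_le_mul_right _ h) ((ceilN_le hn).mp le_rfl)

lemma K_levels {n j J : ℕ} (hn : 0 < n) (h : j ≤ J) (t : ℕ) :
    K n j t = ceilN (K n J t) (2 ^ (J - j)) := by
  have h2 : (0:ℕ) < 2 ^ (J - j) := Nat.two_pow_pos _
  unfold K
  calc ceilN (t * 2 ^ j) n = ceilN (t * 2 ^ j * 2 ^ (J - j)) (n * 2 ^ (J - j)) :=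
        (ceilN_mul_right hn h2 _).symm
    _ = ceilN (t * 2 ^ J) (n * 2 ^ (J - j)) := by
        rw [mul_assoc, ← pow_add, Nat.add_sub_cancel' h]
    _ = ceilN (ceilN (t * 2 ^ J) n) (2 ^ (J - j)) := ceilN_mul hn h2 _

lemma K_refine {n j J t t' : ℕ} (hn : 0 < n) (hjJ : j ≤ J) (h : K n J t = K n J t') :
    K n j t = K n j t' := by
  rw [K_levels hn hjJ, K_levels hn hjJ, h]

lemma K_strict {n J t : ℕ} (hn : 0 < n) (hJ : n ≤ 2 ^ J) (ht : 1 ≤ t) :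
    K n J t < K n J (t + 1) := by
  have hk1 : 1 ≤ K n J t := K_pos hn ht
  have h1 : (K n J t - 1) * n < t * 2 ^ J := by
    have := (le_ceilN hn hk1).mp (le_refl (K n J t))
    exact this
  have hsub : (K n J t - 1) * n = K n J t * n - n := by
    rw [Nat.sub_mul, one_mul]
  have hadd : (t + 1) * 2 ^ J = t * 2 ^ J + 2 ^ J := by ring
  have hKn : K n J t * n < (t + 1) * 2 ^ J := by omega
  have := (le_ceilN (m := n) (a := (t + 1) * 2 ^ J) hn (k := K n J t + 1) (by omega)).mpr
    (by simpa using hKn)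
  exact this

lemma exists_sep {n : ℕ} (hn : 0 < n) (t : ℕ) :
    ∃ j, K n (j + 1) t ≠ K n (j + 1) (t + 1) := by
  refine ⟨n, ?_⟩
  have hJ : n ≤ 2 ^ (n + 1) :=
    le_trans (Nat.lt_two_pow_self (n := n)).le (Nat.pow_le_pow_right (by norm_num) (by omega))
  rcases Nat.eq_zero_or_pos t with rfl | ht
  · have h0 : K n (n + 1) 0 = 0 := by
      unfold K ceilN
      rw [Nat.zero_mul, Nat.zero_add]
      exact Nat.div_eq_of_lt (by omega)
    have h1 : 1 ≤ K n (n + 1) (0 + 1) := K_pos hn le_rfl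
    omega
  · exact Nat.ne_of_lt (K_strict hn hJ ht)

lemma cnt_pos_iff {n j k : ℕ} (hn : 0 < n) (hk : 1 ≤ k) :
    1 ≤ cnt n j k ↔ ∃ t, 1 ≤ t ∧ t ≤ n ∧ K n j t = k := by
  have hn' : (0:ℝ) < (n:ℝ) := by exact_mod_cast hn
  have hp : (0:ℝ) < (2:ℝ) ^ j := by positivity
  have key : ∀ t : ℕ, ((((k : ℝ) - 1) / 2 ^ j < (t : ℝ) / n ∧ (t : ℝ) / n ≤ (k : ℝ) / 2 ^ j)
      ↔ ((k - 1) * n < t * 2 ^ j ∧ t * 2 ^ j ≤ k * n)) := by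
    intro t
    rw [div_lt_div_iff₀ hp hn', div_le_div_iff₀ hn' hp]
    have hc : ((k : ℝ) - 1) = ((k - 1 : ℕ) : ℝ) := by
      rw [Nat.cast_sub hk, Nat.cast_one]
    rw [hc]
    constructor
    · rintro ⟨h1, h2⟩
      exact ⟨by exact_mod_cast h1, by exact_mod_cast h2⟩
    · rintro ⟨h1, h2⟩
      exact ⟨by exact_mod_cast h1, by exact_mod_cast h2⟩
  unfold cnt
  rw [show (1 : ℕ) ≤ _ ↔ 0 < _ from Iff.rfl, Finset.card_pos, Finset.filter_nonempty_iff]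
  constructor
  · rintro ⟨t, htI, hcond⟩
    rw [Finset.mem_Icc] at htI
    exact ⟨t, htI.1, htI.2, (K_eq_iff hn hk).mpr ((key t).mp hcond)⟩
  · rintro ⟨t, h1, h2, h3⟩
    exact ⟨t, Finset.mem_Icc.mpr ⟨h1, h2⟩, (key t).mpr ((K_eq_iff hn hk).mp h3)⟩

lemma sep_spec {n t : ℕ} (hn : 0 < n) (ht : 1 ≤ t) (htn : t ≤ n - 1) :
    K n (Nat.find (exists_sep hn t) + 1) t = 2 * K n (Nat.find (exists_sep hn t)) t - 1 ∧
    K n (Nat.find (exists_sep hn t) + 1) (t + 1) = 2 * K n (Nat.find (exists_sep hn t)) t ∧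
    1 ≤ K n (Nat.find (exists_sep hn t)) t ∧
    K n (Nat.find (exists_sep hn t)) t ≤ 2 ^ (Nat.find (exists_sep hn t)) := by
  set j := Nat.find (exists_sep hn t) with hj
  have hn2 : 2 ≤ n := by omega
  have htn' : t ≤ n := by omega
  have hne : K n (j + 1) t ≠ K n (j + 1) (t + 1) := Nat.find_spec (exists_sep hn t)
  have hab : K n (j + 1) t ≤ K n (j + 1) (t + 1) := K_mono hn (by omega)
  have hpar_t : K n j t = ceilN (K n (j + 1) t) 2 := by
    simpa using K_levels hn (Nat.le_succ j) t
  have hpar_t1 : K n j (t + 1) = ceilN (K n (j + 1) (t + 1)) 2 := by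
    simpa using K_levels hn (Nat.le_succ j) (t + 1)
  have hk1 : 1 ≤ K n j t := K_pos hn ht
  have heq : K n j t = K n j (t + 1) := by
    rcases Nat.eq_zero_or_pos j with h0 | hpos
    · have e1 : K n 0 t = 1 := by
        rw [K_eq_iff hn le_rfl]
        refine ⟨by simp; try omega, by simp; try omega⟩
      have e2 : K n 0 (t + 1) = 1 := by
        rw [K_eq_iff hn le_rfl]
        refine ⟨by simp; try omega, by simp; try omega⟩
      rw [h0, e1, e2]
    · have hmin := Nat.find_min (exists_sep hn t) (show j - 1 < j by omega)
      have hj1 : j - 1 + 1 = j := by omega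
      rw [hj1] at hmin
      exact not_ne_iff.mp hmin
  have hA1 : (K n j t - 1) * 2 < K n (j + 1) t :=
    (le_ceilN (by norm_num) hk1).mp hpar_t.le
  have hA2 : K n (j + 1) t ≤ K n j t * 2 := (ceilN_le (by norm_num)).mp hpar_t.ge
  have hB1 : (K n j t - 1) * 2 < K n (j + 1) (t + 1) := by
    rw [heq] at hk1 ⊢
    exact (le_ceilN (by norm_num) hk1).mp hpar_t1.le
  have hB2 : K n (j + 1) (t + 1) ≤ K n j t * 2 := by
    rw [heq]
    exact (ceilN_le (by norm_num)).mp hpar_t1.ge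
  exact ⟨by omega, by omega, hk1, K_le_pow hn htn'⟩

end Stmt14

open Stmt14 in
/-- The index set `𝓘_n = {(j,k) : 1 ≤ k ≤ 2^j, n_{j+1,2k−1} ≥ 1 and n_{j+1,2k} ≥ 1}` has
cardinality exactly `n − 1`. -/
theorem stmt_14 (n : ℕ) (hn : 1 ≤ n) :
    {p : ℕ × ℕ | 1 ≤ p.2 ∧ p.2 ≤ 2 ^ p.1 ∧
        1 ≤ cnt n (p.1 + 1) (2 * p.2 - 1) ∧ 1 ≤ cnt n (p.1 + 1) (2 * p.2)}.ncard = n - 1 := by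
  classical
  have hn0 : 0 < n := hn
  have himg : {p : ℕ × ℕ | 1 ≤ p.2 ∧ p.2 ≤ 2 ^ p.1 ∧
        1 ≤ cnt n (p.1 + 1) (2 * p.2 - 1) ∧ 1 ≤ cnt n (p.1 + 1) (2 * p.2)} =
      (fun t => (Nat.find (exists_sep hn0 t), K n (Nat.find (exists_sep hn0 t)) t)) ''
        Set.Icc 1 (n - 1) := by
    ext p
    obtain ⟨j, k⟩ := p
    simp only [Set.mem_setOf_eq, Set.mem_image, Set.mem_Icc]
    constructor
    · rintro ⟨hk1, hk2, hc1, hc2⟩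
      obtain ⟨t1, ht11, ht12, hKt1⟩ := (cnt_pos_iff hn0 (by omega)).mp hc1
      obtain ⟨t2, ht21, ht22, hKt2⟩ := (cnt_pos_iff hn0 (by omega)).mp hc2
      have hcpos : 0 < 2 ^ (j + 1) := Nat.two_pow_pos _
      obtain ⟨e1, e2⟩ := (K_eq_iff hn0 (by omega)).mp hKt1
      obtain ⟨e3, e4⟩ := (K_eq_iff hn0 (by omega)).mp hKt2
      set t0 := (2 * k - 1) * n / 2 ^ (j + 1) with ht0
      have hmod : 2 ^ (j + 1) * t0 + (2 * k - 1) * n % 2 ^ (j + 1) = (2 * k - 1) * n :=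
        Nat.div_add_mod _ _
      have hm2 : (2 * k - 1) * n % 2 ^ (j + 1) < 2 ^ (j + 1) := Nat.mod_lt _ hcpos
      have hcomm : 2 ^ (j + 1) * t0 = t0 * 2 ^ (j + 1) := Nat.mul_comm _ _
      have hsucc : (t0 + 1) * 2 ^ (j + 1) = t0 * 2 ^ (j + 1) + 2 ^ (j + 1) := by ring
      have hl : t0 * 2 ^ (j + 1) ≤ (2 * k - 1) * n := by omega
      have hr : (2 * k - 1) * n < (t0 + 1) * 2 ^ (j + 1) := by omega
      have ht1t0 : t1 ≤ t0 := by
        by_contra hcon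
        push_neg at hcon
        have : (t0 + 1) * 2 ^ (j + 1) ≤ t1 * 2 ^ (j + 1) := Nat.mul_le_mul_right _ (by omega)
        omega
      have ht0t2 : t0 < t2 := by
        by_contra hcon
        push_neg at hcon
        have : t2 * 2 ^ (j + 1) ≤ t0 * 2 ^ (j + 1) := Nat.mul_le_mul_right _ hcon
        omega
      have ht0ge : 1 ≤ t0 := by omega
      have ht0le : t0 ≤ n - 1 := by omega
      have hKt0 : K n (j + 1) t0 = 2 * k - 1 := by
        rw [K_eq_iff hn0 (by omega)]
        refine ⟨lt_of_lt_of_le e1 (Nat.mul_le_mul_right _ ht1t0), hl⟩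
      have hKt01 : K n (j + 1) (t0 + 1) = 2 * k := by
        rw [K_eq_iff hn0 (by omega)]
        exact ⟨hr, le_trans (Nat.mul_le_mul_right _ (by omega : t0 + 1 ≤ t2)) e4⟩
      have hKj0 : K n j t0 = k := by
        have p0 := K_levels hn0 (Nat.le_succ j) t0
        rw [hKt0] at p0
        have q0 : ceilN (2 * k - 1) (2 ^ (j + 1 - j)) = k := by
          unfold ceilN
          have : j + 1 - j = 1 := by omega
          rw [this]
          omega
        rw [p0, q0]
      have hKj1 : K n j (t0 + 1) = k := by
        have p1 := K_levels hn0 (Nat.le_succ j) (t0 + 1)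
        rw [hKt01] at p1
        have q1 : ceilN (2 * k) (2 ^ (j + 1 - j)) = k := by
          unfold ceilN
          have : j + 1 - j = 1 := by omega
          rw [this]
          omega
        rw [p1, q1]
      have hfind : Nat.find (exists_sep hn0 t0) = j := by
        rw [Nat.find_eq_iff]
        refine ⟨by rw [hKt0, hKt01]; omega, ?_⟩
        intro m hm
        rw [not_ne_iff]
        exact K_refine hn0 (by omega : m + 1 ≤ j) (hKj0.trans hKj1.symm)
      refine ⟨t0, ⟨ht0ge, ht0le⟩, ?_⟩
      rw [hfind, hKj0]
    · rintro ⟨t, ⟨ht1, ht2⟩, heq⟩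
      rw [Prod.mk.injEq] at heq
      obtain ⟨h1, h2⟩ := heq
      subst h2
      subst h1
      obtain ⟨s1, s2, s3, s4⟩ := sep_spec hn0 ht1 ht2
      have hn2 : 2 ≤ n := by omega
      refine ⟨s3, s4, ?_, ?_⟩
      · exact (cnt_pos_iff hn0 (by omega)).mpr ⟨t, ht1, by omega, s1⟩
      · exact (cnt_pos_iff hn0 (by omega)).mpr ⟨t + 1, by omega, by omega, s2⟩
  have hinj : Set.InjOn (fun t => (Nat.find (exists_sep hn0 t),
      K n (Nat.find (exists_sep hn0 t)) t)) (Set.Icc 1 (n - 1)) := by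
    rintro t ⟨ht1, ht2⟩ t' ⟨ht1', ht2'⟩ heq
    obtain ⟨s1, s2, s3, s4⟩ := sep_spec hn0 ht1 ht2
    obtain ⟨s1', s2', s3', s4'⟩ := sep_spec hn0 ht1' ht2'
    simp only [Prod.mk.injEq] at heq
    obtain ⟨hjeq, hkeq⟩ := heq
    rw [← hjeq] at s1' s2' hkeq
    rw [← hkeq] at s1' s2'
    set j := Nat.find (exists_sep hn0 t) with hj
    set k := K n j t with hk
    have hcpos : 0 < 2 ^ (j + 1) := Nat.two_pow_pos _
    have u2 : t * 2 ^ (j + 1) ≤ (2 * k - 1) * n := ((K_eq_iff hn0 (by omega)).mp s1).2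
    have u1 : (2 * k - 1) * n < (t + 1) * 2 ^ (j + 1) := ((K_eq_iff hn0 (by omega)).mp s2).1
    have v2 : t' * 2 ^ (j + 1) ≤ (2 * k - 1) * n := ((K_eq_iff hn0 (by omega)).mp s1').2
    have v1 : (2 * k - 1) * n < (t' + 1) * 2 ^ (j + 1) := ((K_eq_iff hn0 (by omega)).mp s2').1
    have h1 : t ≤ t' := by
      by_contra hcon
      push_neg at hcon
      have : (t' + 1) * 2 ^ (j + 1) ≤ t * 2 ^ (j + 1) := Nat.mul_le_mul_right _ (by omega)
      omega
    have h2 : t' ≤ t := by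
      by_contra hcon
      push_neg at hcon
      have : (t + 1) * 2 ^ (j + 1) ≤ t' * 2 ^ (j + 1) := Nat.mul_le_mul_right _ (by omega)
      omega
    omega
  rw [himg, Set.ncard_image_of_injOn hinj, ← Finset.coe_Icc, Set.ncard_coe_finset,
    Nat.card_Icc]
  omega
end

section
/- Let m₀ : (0,1] → ℝ satisfy TV(m₀; {x_1,…,x_n}) ≤ C₀ with x_t = t/n, let ψ_{j,k} be the adapted Haar functions normalized so that (1/n) Σ_t ψ_{j,k}(x_t)² = 1, and let β⁰_{j,k} = (1/n) Σ_{t=1}^n ψ_{j,k}(x_t) m₀(x_t). Set t_{n,j} = K n^{−2/3} 2^{j/2} for a constant K > 0. Then S_n(m₀) := Σ_{j : 2^j ≥ n^{1/3}} Σ_{k : (j,k) ∈ 𝓘_n} min{(β⁰_{j,k})², t_{n,j}²} ≤ C n^{−2/3} for a constant C depending only on C₀ and K. -/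
open MeasureTheory Finset

/-- The pre-wavelet `ψ̃_{j,k} = (1/n_{j+1,2k−1}) 𝟙_{I_{j+1,2k−1}} − (1/n_{j+1,2k}) 𝟙_{I_{j+1,2k}}`. -/
noncomputable def psiT (n j k : ℕ) : ℝ → ℝ := fun x =>
  Set.indicator (Set.Ioc ((2 * (k : ℝ) - 2) / 2 ^ (j + 1)) ((2 * (k : ℝ) - 1) / 2 ^ (j + 1)))
      (fun _ => 1 / (cnt n (j + 1) (2 * k - 1) : ℝ)) x
    - Set.indicator (Set.Ioc ((2 * (k : ℝ) - 1) / 2 ^ (j + 1)) ((2 * (k : ℝ)) / 2 ^ (j + 1)))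
      (fun _ => 1 / (cnt n (j + 1) (2 * k) : ℝ)) x

/-- The adapted Haar wavelet, normalized so that `(1/n) Σ_t ψ_{j,k}(x_t)² = 1`. -/
noncomputable def psiN (n j k : ℕ) : ℝ → ℝ := fun x =>
  psiT n j k x /
    Real.sqrt ((1 / (n : ℝ))
      * (1 / (cnt n (j + 1) (2 * k - 1) : ℝ) + 1 / (cnt n (j + 1) (2 * k) : ℝ)))

/-- The empirical wavelet coefficient `β⁰_{j,k} = (1/n) Σ_{t=1}^n ψ_{j,k}(x_t) m₀(x_t)`. -/
noncomputable def betaCoef (n j k : ℕ) (m : ℝ → ℝ) : ℝ :=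
  (1 / (n : ℝ)) * ∑ t ∈ Finset.Icc 1 n, psiN n j k ((t : ℝ) / n) * m ((t : ℝ) / n)

/-- The set of sample points `{x_1,…,x_n}`, `x_t = t/n`. -/
def samplePts (n : ℕ) : Set ℝ := {x | ∃ t : ℕ, 1 ≤ t ∧ t ≤ n ∧ x = (t : ℝ) / n}

namespace Stmt17

noncomputable def phi (r : ℝ) : ℝ := if 1 ≤ r then 4*r - 1 else 2*r^2

lemma phi_big {r : ℝ} (h : 1 ≤ r) : phi r = 4*r - 1 := if_pos h
lemma phi_small {r : ℝ} (h : r < 1) : phi r = 2*r^2 := if_neg (not_le.2 h)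

lemma phi_base {r : ℝ} (hr : 0 ≤ r) : min (r^2) 1 ≤ phi r := by
  rcases le_or_gt 1 r with h | h
  · rw [phi_big h]; nlinarith [min_le_right (r^2) (1:ℝ)]
  · rw [phi_small h]; nlinarith [min_le_left (r^2) (1:ℝ)]

lemma phi_le {r : ℝ} (hr : 0 ≤ r) : phi r ≤ 4*r := by
  rcases le_or_gt 1 r with h | h
  · rw [phi_big h]; linarith
  · rw [phi_small h]; nlinarith

lemma phi_nonneg {r : ℝ} (hr : 0 ≤ r) : 0 ≤ phi r := by
  rcases le_or_gt 1 r with h | h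
  · rw [phi_big h]; linarith
  · rw [phi_small h]; positivity

lemma phi_rec {r rL rR : ℝ} (hL : 0 ≤ rL) (hR : 0 ≤ rR) (h : rL + rR ≤ r/2) :
    min (r^2) 1 + 2 * phi rL + 2 * phi rR ≤ phi r := by
  have hm1 := min_le_right (r^2) (1:ℝ)
  have hm2 := min_le_left (r^2) (1:ℝ)
  rcases le_or_gt 1 r with h1 | h1
  · rw [phi_big h1]
    rcases le_or_gt 1 rL with h2 | h2 <;> rcases le_or_gt 1 rR with h3 | h3
    · rw [phi_big h2, phi_big h3]; linarith
    · rw [phi_big h2, phi_small h3]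
      nlinarith [mul_nonneg hR (by linarith : (0:ℝ) ≤ 1 - rR)]
    · rw [phi_small h2, phi_big h3]
      nlinarith [mul_nonneg hL (by linarith : (0:ℝ) ≤ 1 - rL)]
    · rw [phi_small h2, phi_small h3]
      nlinarith [mul_nonneg hL (by linarith : (0:ℝ) ≤ 1 - rL),
        mul_nonneg hR (by linarith : (0:ℝ) ≤ 1 - rR)]
  · rw [phi_small h1, phi_small (by linarith : rL < 1), phi_small (by linarith : rR < 1)]
    nlinarith [mul_nonneg hL hR]


def ptsIn (n j k : ℕ) : Set ℝ :=
  samplePts n ∩ Set.Ioc (((k : ℝ) - 1) / 2 ^ j) ((k : ℝ) / 2 ^ j)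

noncomputable def vv (m : ℝ → ℝ) (n j k : ℕ) : ℝ := (eVariationOn m (ptsIn n j k)).toReal

lemma vv_nonneg (m : ℝ → ℝ) (n j k : ℕ) : 0 ≤ vv m n j k := ENNReal.toReal_nonneg

lemma ptsIn_subset (n j k : ℕ) : ptsIn n j k ⊆ samplePts n := Set.inter_subset_left

lemma evar_ptsIn_ne_top {m : ℝ → ℝ} {n : ℕ} (hfin : eVariationOn m (samplePts n) ≠ ⊤)
    (j k : ℕ) : eVariationOn m (ptsIn n j k) ≠ ⊤ :=
  fun h => hfin (top_le_iff.1 (h ▸ eVariationOn.mono m (ptsIn_subset n j k)))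

lemma vv_le {m : ℝ → ℝ} {n : ℕ} {C₀ : ℝ}
    (hv : eVariationOn m (samplePts n) ≤ ENNReal.ofReal C₀) (hC₀ : 0 ≤ C₀) (j k : ℕ) :
    vv m n j k ≤ C₀ := by
  have h := (eVariationOn.mono m (ptsIn_subset n j k)).trans hv
  calc vv m n j k ≤ (ENNReal.ofReal C₀).toReal := ENNReal.toReal_mono ENNReal.ofReal_ne_top h
  _ = C₀ := ENNReal.toReal_ofReal hC₀

/-- left child interval is inside the parent interval -/
lemma child1_subset {j k : ℕ} (hk : 1 ≤ k) :
    ptsIn n (j+1) (2*k-1) ⊆ ptsIn n j k := by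
  apply Set.inter_subset_inter_right
  have hc : ((2*k-1 : ℕ) : ℝ) = 2*(k:ℝ) - 1 := by
    push_cast [Nat.cast_sub (by omega : 1 ≤ 2*k)]; ring
  have h2 : (0:ℝ) < 2 ^ j := by positivity
  intro x hx
  rw [Set.mem_Ioc] at *
  rw [hc] at hx
  rw [pow_succ] at hx
  constructor
  · calc ((k:ℝ)-1)/2^j = (2*(k:ℝ)-1-1)/(2^j*2) := by ring
    _ < x := hx.1
  · calc x ≤ (2*(k:ℝ)-1)/(2^j*2) := hx.2
    _ ≤ (k:ℝ)/2^j := by rw [div_le_div_iff₀ (by positivity) h2]; ring_nf; linarith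

lemma child2_subset {j k : ℕ} (hk : 1 ≤ k) :
    ptsIn n (j+1) (2*k) ⊆ ptsIn n j k := by
  apply Set.inter_subset_inter_right
  have h2 : (0:ℝ) < 2 ^ j := by positivity
  intro x hx
  rw [Set.mem_Ioc] at *
  push_cast at hx
  rw [pow_succ] at hx
  constructor
  · have hle : ((k:ℝ)-1)/2^j ≤ (2*(k:ℝ)-1)/(2^j*2) := by
      rw [div_le_div_iff₀ h2 (by positivity)]; ring_nf; linarith
    linarith [hx.1]
  · have he : (2*(k:ℝ))/(2^j*2) = (k:ℝ)/2^j := by ring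
    linarith [hx.2]

lemma vv_superadd {m : ℝ → ℝ} {n : ℕ} (hfin : eVariationOn m (samplePts n) ≠ ⊤)
    {j k : ℕ} (hk : 1 ≤ k) :
    vv m n (j+1) (2*k-1) + vv m n (j+1) (2*k) ≤ vv m n j k := by
  have hc : ((2*k-1 : ℕ) : ℝ) = 2*(k:ℝ) - 1 := by
    push_cast [Nat.cast_sub (by omega : 1 ≤ 2*k)]; ring
  have horder : ∀ x ∈ ptsIn n (j+1) (2*k-1), ∀ y ∈ ptsIn n (j+1) (2*k), x ≤ y := by
    intro x hx y hy
    have hx2 := hx.2.2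
    have hy1 := hy.2.1
    rw [hc] at hx2
    have : ((2*k : ℕ):ℝ) - 1 = 2*(k:ℝ) - 1 := by push_cast; ring
    rw [this] at hy1
    exact hx2.trans hy1.le
  have key := eVariationOn.add_le_union m horder
  have hmono : eVariationOn m (ptsIn n (j+1) (2*k-1) ∪ ptsIn n (j+1) (2*k))
      ≤ eVariationOn m (ptsIn n j k) :=
    eVariationOn.mono m (Set.union_subset (child1_subset hk) (child2_subset hk))
  have h := key.trans hmono
  have h1 := evar_ptsIn_ne_top hfin (j+1) (2*k-1)
  have h2 := evar_ptsIn_ne_top hfin (j+1) (2*k)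
  have h3 := evar_ptsIn_ne_top hfin j k
  unfold vv
  rw [← ENNReal.toReal_add h1 h2]
  exact ENNReal.toReal_mono h3 h

/-- pointwise variation bound -/
lemma abs_sub_le_vv {m : ℝ → ℝ} {n : ℕ} (hfin : eVariationOn m (samplePts n) ≠ ⊤)
    {j k : ℕ} {x y : ℝ} (hx : x ∈ ptsIn n j k) (hy : y ∈ ptsIn n j k) :
    |m x - m y| ≤ vv m n j k := by
  have h := eVariationOn.edist_le m hx hy
  have h3 := evar_ptsIn_ne_top hfin j k
  have := ENNReal.toReal_mono h3 h
  rwa [edist_dist, ENNReal.toReal_ofReal dist_nonneg, Real.dist_eq] at this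


noncomputable def tau (K : ℝ) (n j : ℕ) : ℝ := K * (n : ℝ) ^ (-(2:ℝ)/3) * 2 ^ j

noncomputable def tsq (K : ℝ) (n j : ℕ) : ℝ := (K * (n : ℝ) ^ (-(2:ℝ)/3)) ^ 2 * 2 ^ j

noncomputable def gg (K : ℝ) (m : ℝ → ℝ) (n j k : ℕ) : ℝ :=
  min ((vv m n j k) ^ 2 / 2 ^ j) (tsq K n j)

noncomputable def TS (K : ℝ) (m : ℝ → ℝ) (n : ℕ) : ℕ → ℕ → ℕ → ℝ
  | 0, j, k => gg K m n j k
  | (D+1), j, k => gg K m n j k + TS K m n D (j+1) (2*k-1) + TS K m n D (j+1) (2*k)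


section tree

variable {K : ℝ} {m : ℝ → ℝ} {n : ℕ}

lemma npow_pos (hn : 1 ≤ n) : (0:ℝ) < (n : ℝ) ^ (-(2:ℝ)/3) := by
  apply Real.rpow_pos_of_pos; exact_mod_cast Nat.lt_of_lt_of_le Nat.zero_lt_one hn

lemma tau_pos (hK : 0 < K) (hn : 1 ≤ n) (j : ℕ) : 0 < tau K n j := by
  unfold tau; have := npow_pos (n := n) hn; positivity

lemma tsq_pos (hK : 0 < K) (hn : 1 ≤ n) (j : ℕ) : 0 < tsq K n j := by
  unfold tsq; have := npow_pos (n := n) hn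
  have : K * (n : ℝ) ^ (-(2:ℝ)/3) ≠ 0 := by positivity
  positivity

lemma tau_succ (j : ℕ) : tau K n (j+1) = 2 * tau K n j := by unfold tau; ring

lemma tsq_succ (j : ℕ) : tsq K n (j+1) = 2 * tsq K n j := by unfold tsq; ring

lemma gg_eq (hK : 0 < K) (hn : 1 ≤ n) (j k : ℕ) :
    gg K m n j k = tsq K n j * min ((vv m n j k / tau K n j)^2) 1 := by
  have h2 := npow_pos (n := n) hn
  have key : tsq K n j * (vv m n j k / tau K n j)^2 = (vv m n j k)^2 / 2^j := by
    have hKN : K * (n : ℝ) ^ (-(2:ℝ)/3) ≠ 0 := by positivity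
    have h2j : (2:ℝ)^j ≠ 0 := by positivity
    unfold tsq tau
    field_simp
  rw [mul_min_of_nonneg _ _ (tsq_pos hK hn j).le, mul_one, key]
  rfl

lemma TS_le (hK : 0 < K) (hn : 1 ≤ n) (hfin : eVariationOn m (samplePts n) ≠ ⊤) :
    ∀ (D j k : ℕ), 1 ≤ k →
      TS K m n D j k ≤ tsq K n j * phi (vv m n j k / tau K n j) := by
  intro D
  induction D with
  | zero =>
    intro j k hk
    show gg K m n j k ≤ _
    rw [gg_eq hK hn]
    exact mul_le_mul_of_nonneg_left
      (phi_base (div_nonneg (vv_nonneg m n j k) (tau_pos hK hn j).le))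
      (tsq_pos hK hn j).le
  | succ D ih =>
    intro j k hk
    show gg K m n j k + TS K m n D (j+1) (2*k-1) + TS K m n D (j+1) (2*k) ≤ _
    have hL := ih (j+1) (2*k-1) (by omega)
    have hR := ih (j+1) (2*k) (by omega)
    have htau := tau_pos hK hn j
    have htsq := tsq_pos hK hn j
    set r := vv m n j k / tau K n j with hrdef
    set rL := vv m n (j+1) (2*k-1) / tau K n (j+1) with hrLdef
    set rR := vv m n (j+1) (2*k) / tau K n (j+1) with hrRdef
    have hrL : 0 ≤ rL := div_nonneg (vv_nonneg _ _ _ _) (tau_pos hK hn (j+1)).le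
    have hrR : 0 ≤ rR := div_nonneg (vv_nonneg _ _ _ _) (tau_pos hK hn (j+1)).le
    have hsum : rL + rR ≤ r / 2 := by
      rw [hrLdef, hrRdef, hrdef, tau_succ, ← add_div, div_div]
      rw [div_le_div_iff₀ (by positivity) (by positivity)]
      have := vv_superadd hfin hk (j := j) (n := n)
      nlinarith [vv_superadd hfin hk (j := j) (n := n) (m := m)]
    calc gg K m n j k + TS K m n D (j+1) (2*k-1) + TS K m n D (j+1) (2*k)
        ≤ tsq K n j * min (r^2) 1 + tsq K n (j+1) * phi rL + tsq K n (j+1) * phi rR := by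
          rw [gg_eq hK hn]; exact add_le_add (add_le_add le_rfl hL) hR
      _ = tsq K n j * (min (r^2) 1 + 2 * phi rL + 2 * phi rR) := by
          rw [tsq_succ]; ring
      _ ≤ tsq K n j * phi r :=
          mul_le_mul_of_nonneg_left (phi_rec hrL hrR hsum) htsq.le

lemma TS_expand (K : ℝ) (m : ℝ → ℝ) (n : ℕ) :
    ∀ (D j k : ℕ), 1 ≤ k →
      TS K m n D j k
        = ∑ d ∈ range (D+1), ∑ k' ∈ Ioc (2^d*(k-1)) (2^d*k), gg K m n (j+d) k' := by
  intro D
  induction D with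
  | zero =>
    intro j k hk
    have h1 : Finset.Ioc (k-1) k = {k} := by ext x; simp; omega
    simp [TS, h1]
  | succ D ih =>
    intro j k hk
    show gg K m n j k + TS K m n D (j+1) (2*k-1) + TS K m n D (j+1) (2*k) = _
    have hsplit : ∀ d, ∑ k' ∈ Ioc (2^(d+1)*(k-1)) (2^(d+1)*k), gg K m n (j+(d+1)) k'
        = (∑ k' ∈ Ioc (2^d*(2*k-1-1)) (2^d*(2*k-1)), gg K m n (j+(d+1)) k')
          + ∑ k' ∈ Ioc (2^d*(2*k-1)) (2^d*(2*k)), gg K m n (j+(d+1)) k' := by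
      intro d
      have e1 : 2^(d+1)*(k-1) = 2^d*(2*k-1-1) := by
        rw [pow_succ]
        have h : 2*k-1-1 = 2*(k-1) := by omega
        rw [h]; ring
      have e2 : 2^(d+1)*k = 2^d*(2*k) := by rw [pow_succ]; ring
      have hab : 2^d*(2*k-1-1) ≤ 2^d*(2*k-1) := Nat.mul_le_mul_left _ (by omega)
      have hbc : 2^d*(2*k-1) ≤ 2^d*(2*k) := Nat.mul_le_mul_left _ (by omega)
      rw [e1, e2, ← Finset.sum_Ioc_consecutive _ hab hbc]
    have hidx : ∀ d, j + 1 + d = j + (d+1) := fun d => by omega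
    rw [Finset.sum_range_succ' _ (D+1)]
    rw [ih (j+1) (2*k-1) (by omega), ih (j+1) (2*k) (by omega)]
    simp only [hidx, hsplit, Finset.sum_add_distrib, pow_zero, one_mul]
    have h1 : Finset.Ioc (k-1) k = {k} := by ext x; simp; omega
    rw [h1]
    simp only [Finset.sum_singleton, Nat.add_zero]
    ring

end tree

set_option maxHeartbeats 2000000 in
lemma beta_sq_le {m : ℝ → ℝ} {n j k : ℕ} (hn : 1 ≤ n) (hk : 1 ≤ k)
    (h1 : 1 ≤ cnt n (j+1) (2*k-1)) (h2 : 1 ≤ cnt n (j+1) (2*k))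
    (hfin : eVariationOn m (samplePts n) ≠ ⊤) :
    (betaCoef n j k m)^2 ≤ (vv m n j k)^2 / 2^j := by
  classical
  have hnpos : (0:ℝ) < n := by exact_mod_cast hn
  have hp : (0:ℝ) < 2^j := by positivity
  have hps : (0:ℝ) < 2^(j+1) := by positivity
  have hc1 : ((2*k-1 : ℕ) : ℝ) = 2*(k:ℝ) - 1 := by
    push_cast [Nat.cast_sub (by omega : 1 ≤ 2*k)]; ring
  have hc2 : ((2*k : ℕ) : ℝ) = 2*(k:ℝ) := by push_cast; ring
  set n₁ := cnt n (j+1) (2*k-1) with hn₁def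
  set n₂ := cnt n (j+1) (2*k) with hn₂def
  have hn₁ : (0:ℝ) < n₁ := by exact_mod_cast h1
  have hn₂ : (0:ℝ) < n₂ := by exact_mod_cast h2
  set L := (Finset.Icc 1 n).filter
    (fun t : ℕ => (2*(k:ℝ)-2) / 2^(j+1) < (t:ℝ)/n ∧ (t:ℝ)/n ≤ (2*(k:ℝ)-1) / 2^(j+1)) with hLdef
  set R := (Finset.Icc 1 n).filter
    (fun t : ℕ => (2*(k:ℝ)-1) / 2^(j+1) < (t:ℝ)/n ∧ (t:ℝ)/n ≤ (2*(k:ℝ)) / 2^(j+1)) with hRdef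
  have heq12 : (2*(k:ℝ)-1-1) = 2*(k:ℝ)-2 := by ring
  have hLcard : n₁ = L.card := by
    rw [hn₁def, cnt, hLdef]
    congr 1
    apply Finset.filter_congr
    intro t _
    rw [hc1, heq12]
  have hRcard : n₂ = R.card := by
    rw [hn₂def, cnt, hRdef]
    congr 1
    apply Finset.filter_congr
    intro t _
    rw [hc2]
  set A := ∑ t ∈ L, m ((t:ℝ)/n) with hAdef
  set B := ∑ t ∈ R, m ((t:ℝ)/n) with hBdef
  set σ := (1/(n:ℝ)) * (1/(n₁:ℝ) + 1/(n₂:ℝ)) with hσdef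
  clear_value n₁ n₂ L R A B σ
  have hσ : 0 < σ := by rw [hσdef]; positivity
  -- the raw sum
  have hsum : ∑ t ∈ Finset.Icc 1 n, psiT n j k ((t:ℝ)/n) * m ((t:ℝ)/n)
      = (1/(n₁:ℝ)) * A - (1/(n₂:ℝ)) * B := by
    have e1 : ∀ t ∈ Finset.Icc 1 n, psiT n j k ((t:ℝ)/n) * m ((t:ℝ)/n)
        = (if (2*(k:ℝ)-2) / 2^(j+1) < (t:ℝ)/n ∧ (t:ℝ)/n ≤ (2*(k:ℝ)-1) / 2^(j+1)
            then (1/(n₁:ℝ)) * m ((t:ℝ)/n) else 0)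
          - (if (2*(k:ℝ)-1) / 2^(j+1) < (t:ℝ)/n ∧ (t:ℝ)/n ≤ (2*(k:ℝ)) / 2^(j+1)
            then (1/(n₂:ℝ)) * m ((t:ℝ)/n) else 0) := by
      intro t _
      simp only [psiT, Set.indicator_apply, Set.mem_Ioc, ← hn₁def, ← hn₂def]
      rw [sub_mul, ite_mul, ite_mul, zero_mul]
    rw [Finset.sum_congr rfl e1, Finset.sum_sub_distrib]
    rw [← Finset.sum_filter, ← Finset.sum_filter, ← hLdef, ← hRdef]
    rw [← Finset.mul_sum, ← Finset.mul_sum, ← hAdef, ← hBdef]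
  -- betaCoef in closed form
  have hβ : betaCoef n j k m
      = (1/(n:ℝ)) * (((1/(n₁:ℝ)) * A - (1/(n₂:ℝ)) * B) / Real.sqrt σ) := by
    rw [betaCoef]
    congr 1
    have e2 : ∀ t ∈ Finset.Icc 1 n, psiN n j k ((t:ℝ)/n) * m ((t:ℝ)/n)
        = (psiT n j k ((t:ℝ)/n) * m ((t:ℝ)/n)) / Real.sqrt σ := by
      intro t _
      simp only [psiN, ← hn₁def, ← hn₂def, ← hσdef]
      ring
    rw [Finset.sum_congr rfl e2, ← Finset.sum_div, hsum]
  -- memberships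
  have epar : (2*(k:ℝ)-2)/2^(j+1) = ((k:ℝ)-1)/2^j := by rw [pow_succ]; ring
  have epar2 : (2*(k:ℝ))/2^(j+1) = (k:ℝ)/2^j := by rw [pow_succ]; ring
  have hmid : (2*(k:ℝ)-1)/2^(j+1) ≤ (k:ℝ)/2^j := by
    rw [← epar2]; gcongr; linarith
  have hmid2 : ((k:ℝ)-1)/2^j ≤ (2*(k:ℝ)-1)/2^(j+1) := by
    rw [← epar]; gcongr; linarith
  have hmemL : ∀ t ∈ L, ((t:ℝ)/n) ∈ ptsIn n j k := by
    intro t ht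
    rw [hLdef, Finset.mem_filter, Finset.mem_Icc] at ht
    obtain ⟨⟨ht1, ht2⟩, hb1, hb2⟩ := ht
    exact ⟨⟨t, ht1, ht2, rfl⟩, by rw [← epar]; exact hb1, hb2.trans hmid⟩
  have hmemR : ∀ t ∈ R, ((t:ℝ)/n) ∈ ptsIn n j k := by
    intro t ht
    rw [hRdef, Finset.mem_filter, Finset.mem_Icc] at ht
    obtain ⟨⟨ht1, ht2⟩, hb1, hb2⟩ := ht
    exact ⟨⟨t, ht1, ht2, rfl⟩, lt_of_le_of_lt hmid2 hb1, by rw [← epar2]; exact hb2⟩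
  set V := vv m n j k with hV
  have hVnn := vv_nonneg m n j k
  -- difference of averages bounded by variation
  have key : ∑ s ∈ L, ∑ t ∈ R, (m ((s:ℝ)/n) - m ((t:ℝ)/n)) = (n₂:ℝ)*A - (n₁:ℝ)*B := by
    have inner : ∀ s ∈ L, ∑ t ∈ R, (m ((s:ℝ)/n) - m ((t:ℝ)/n))
        = (n₂:ℝ) * m ((s:ℝ)/n) - B := by
      intro s _
      rw [Finset.sum_sub_distrib, Finset.sum_const, nsmul_eq_mul, ← hBdef, hRcard]
    rw [Finset.sum_congr rfl inner, Finset.sum_sub_distrib, Finset.sum_const, nsmul_eq_mul,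
      ← Finset.mul_sum, ← hAdef, hLcard]
  have habs : |(n₂:ℝ)*A - (n₁:ℝ)*B| ≤ (n₁:ℝ)*((n₂:ℝ)*V) := by
    rw [← key]
    calc |∑ s ∈ L, ∑ t ∈ R, (m ((s:ℝ)/n) - m ((t:ℝ)/n))|
        ≤ ∑ s ∈ L, |∑ t ∈ R, (m ((s:ℝ)/n) - m ((t:ℝ)/n))| := Finset.abs_sum_le_sum_abs _ _
      _ ≤ ∑ s ∈ L, ∑ t ∈ R, |m ((s:ℝ)/n) - m ((t:ℝ)/n)| :=
          Finset.sum_le_sum (fun s _ => Finset.abs_sum_le_sum_abs _ _)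
      _ ≤ ∑ s ∈ L, ∑ t ∈ R, V := by
          apply Finset.sum_le_sum
          intro s hs
          apply Finset.sum_le_sum
          intro t ht
          exact abs_sub_le_vv hfin (hmemL s hs) (hmemR t ht)
      _ = (n₁:ℝ)*((n₂:ℝ)*V) := by
          rw [Finset.sum_const, Finset.sum_const, nsmul_eq_mul, nsmul_eq_mul,
            ← hLcard, ← hRcard]
  have hD : |(1/(n₁:ℝ))*A - (1/(n₂:ℝ))*B| ≤ V := by
    have hDeq : (1/(n₁:ℝ))*A - (1/(n₂:ℝ))*B = ((n₂:ℝ)*A - (n₁:ℝ)*B)/((n₁:ℝ)*(n₂:ℝ)) := by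
      field_simp
    rw [hDeq, abs_div, abs_of_pos (show (0:ℝ) < (n₁:ℝ)*(n₂:ℝ) by positivity),
      div_le_iff₀ (show (0:ℝ) < (n₁:ℝ)*(n₂:ℝ) by positivity)]
    calc |(n₂:ℝ)*A - (n₁:ℝ)*B| ≤ (n₁:ℝ)*((n₂:ℝ)*V) := habs
      _ = V * ((n₁:ℝ)*(n₂:ℝ)) := by ring
  -- counting bound
  have hk1 : (1:ℝ) ≤ (k:ℝ) := by exact_mod_cast hk
  have hcnt : (n₁:ℝ) + (n₂:ℝ) ≤ (n:ℝ)/2^j + 1 := by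
    set P := (Finset.Icc 1 n).filter
      (fun t : ℕ => (n:ℝ)*((k:ℝ)-1)/2^j < (t:ℝ) ∧ (t:ℝ) ≤ (n:ℝ)*(k:ℝ)/2^j) with hPdef
    have hLP : L ⊆ P := by
      intro t ht
      rw [hLdef, Finset.mem_filter] at ht
      obtain ⟨hti, hb1, hb2⟩ := ht
      rw [hPdef, Finset.mem_filter]
      refine ⟨hti, ?_, ?_⟩
      · rw [epar] at hb1
        have h := (lt_div_iff₀ hnpos).mp hb1
        calc (n:ℝ)*((k:ℝ)-1)/2^j = ((k:ℝ)-1)/2^j*n := by ring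
          _ < t := h
      · have h := (div_le_iff₀ hnpos).mp (hb2.trans hmid)
        calc (t:ℝ) ≤ (k:ℝ)/2^j*n := h
          _ = (n:ℝ)*(k:ℝ)/2^j := by ring
    have hRP : R ⊆ P := by
      intro t ht
      rw [hRdef, Finset.mem_filter] at ht
      obtain ⟨hti, hb1, hb2⟩ := ht
      rw [hPdef, Finset.mem_filter]
      refine ⟨hti, ?_, ?_⟩
      · have h := (lt_div_iff₀ hnpos).mp (lt_of_le_of_lt hmid2 hb1)
        calc (n:ℝ)*((k:ℝ)-1)/2^j = ((k:ℝ)-1)/2^j*n := by ring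
          _ < t := h
      · rw [epar2] at hb2
        have h := (div_le_iff₀ hnpos).mp hb2
        calc (t:ℝ) ≤ (k:ℝ)/2^j*n := h
          _ = (n:ℝ)*(k:ℝ)/2^j := by ring
    have hdisj : Disjoint L R := by
      rw [Finset.disjoint_left]
      intro t htL htR
      rw [hLdef, Finset.mem_filter] at htL
      rw [hRdef, Finset.mem_filter] at htR
      exact absurd htL.2.2 (not_le.2 htR.2.1)
    have hcard : L.card + R.card ≤ P.card := by
      rw [← Finset.card_union_of_disjoint hdisj]
      exact Finset.card_le_card (Finset.union_subset hLP hRP)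
    have hA0 : (0:ℝ) ≤ (n:ℝ)*((k:ℝ)-1)/2^j :=
      div_nonneg (mul_nonneg hnpos.le (by linarith)) hp.le
    set m1 := Nat.floor ((n:ℝ)*((k:ℝ)-1)/2^j) with hm1
    set m2 := Nat.floor ((n:ℝ)*(k:ℝ)/2^j) with hm2
    have hPsub : P ⊆ Finset.Ioc m1 m2 := by
      intro t ht
      rw [hPdef, Finset.mem_filter] at ht
      obtain ⟨hti, ha, hb⟩ := ht
      rw [Finset.mem_Ioc]
      constructor
      · have : (m1:ℝ) < t := lt_of_le_of_lt (Nat.floor_le hA0) ha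
        exact_mod_cast this
      · exact Nat.le_floor hb
    have hm12 : m1 ≤ m2 := Nat.floor_mono (by gcongr; linarith)
    have hPcard : (P.card:ℝ) ≤ (n:ℝ)/2^j + 1 := by
      have hc1' : P.card ≤ m2 - m1 := by
        rw [← Nat.card_Ioc]; exact Finset.card_le_card hPsub
      have h3 : (m2:ℝ) ≤ (n:ℝ)*(k:ℝ)/2^j := Nat.floor_le (by positivity)
      have h4 : (n:ℝ)*((k:ℝ)-1)/2^j < (m1:ℝ) + 1 := Nat.lt_floor_add_one _
      calc (P.card:ℝ) ≤ ((m2-m1:ℕ):ℝ) := by exact_mod_cast hc1'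
        _ = (m2:ℝ) - (m1:ℝ) := by rw [Nat.cast_sub hm12]
        _ ≤ (n:ℝ)*(k:ℝ)/2^j - ((n:ℝ)*((k:ℝ)-1)/2^j - 1) := by linarith
        _ = (n:ℝ)/2^j + 1 := by ring
    have hfin2 : (n₁:ℝ) + (n₂:ℝ) ≤ (P.card:ℝ) := by
      rw [hLcard, hRcard]; exact_mod_cast hcard
    linarith
  -- denominator bound
  have hn₁1 : (1:ℝ) ≤ (n₁:ℝ) := by exact_mod_cast h1
  have hn₂1 : (1:ℝ) ≤ (n₂:ℝ) := by exact_mod_cast h2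
  have h2jn : (2:ℝ)^j ≤ (n:ℝ) := by
    have : (1:ℝ) ≤ (n:ℝ)/2^j := by linarith
    calc (2:ℝ)^j = 1*2^j := by ring
      _ ≤ (n:ℝ)/2^j*2^j := by gcongr
      _ = (n:ℝ) := by field_simp
  have hb2n : ((n₁:ℝ)+(n₂:ℝ))*2^j ≤ 2*(n:ℝ) := by
    calc ((n₁:ℝ)+(n₂:ℝ))*2^j ≤ ((n:ℝ)/2^j + 1)*2^j := by gcongr
      _ = (n:ℝ) + 2^j := by field_simp
      _ ≤ 2*(n:ℝ) := by linarith
  have hkey : (2:ℝ)^j ≤ (n:ℝ)^2 * σ := by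
    have hσ2 : (n:ℝ)^2 * σ = (n:ℝ)*((n₁:ℝ)+(n₂:ℝ))/((n₁:ℝ)*(n₂:ℝ)) := by
      rw [hσdef]; field_simp; ring
    rw [hσ2, le_div_iff₀ (by positivity)]
    have h4ab : 4*((n₁:ℝ)*(n₂:ℝ)) ≤ ((n₁:ℝ)+(n₂:ℝ))^2 := by
      nlinarith [sq_nonneg ((n₁:ℝ)-(n₂:ℝ))]
    have hstep : 4*((n₁:ℝ)*(n₂:ℝ))*2^j ≤ ((n₁:ℝ)+(n₂:ℝ))*(2*(n:ℝ)) := by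
      calc 4*((n₁:ℝ)*(n₂:ℝ))*2^j ≤ ((n₁:ℝ)+(n₂:ℝ))^2*2^j :=
            mul_le_mul_of_nonneg_right h4ab hp.le
        _ = ((n₁:ℝ)+(n₂:ℝ))*(((n₁:ℝ)+(n₂:ℝ))*2^j) := by ring
        _ ≤ ((n₁:ℝ)+(n₂:ℝ))*(2*(n:ℝ)) :=
            mul_le_mul_of_nonneg_left hb2n (by positivity)
    linarith [hstep, mul_nonneg hnpos.le (show (0:ℝ) ≤ (n₁:ℝ)+(n₂:ℝ) by positivity)]
  -- final assembly
  have hfinal : (betaCoef n j k m)^2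
      = ((1/(n₁:ℝ))*A - (1/(n₂:ℝ))*B)^2 / ((n:ℝ)^2 * σ) := by
    rw [hβ, mul_pow, div_pow, div_pow, Real.sq_sqrt hσ.le]
    ring
  rw [hfinal]
  have hD2 : ((1/(n₁:ℝ))*A - (1/(n₂:ℝ))*B)^2 ≤ V^2 := by
    have h := abs_le.mp hD
    exact sq_le_sq' (by linarith [h.1]) h.2
  have hpos : (0:ℝ) < (n:ℝ)^2 * σ := by positivity
  calc ((1/(n₁:ℝ))*A - (1/(n₂:ℝ))*B)^2 / ((n:ℝ)^2 * σ)
      ≤ V^2 / ((n:ℝ)^2 * σ) := by gcongr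
    _ ≤ V^2 / 2^j := by gcongr


lemma gg_nonneg (K : ℝ) (m : ℝ → ℝ) (n j k : ℕ) (hK : 0 < K) (hn : 1 ≤ n) :
    0 ≤ gg K m n j k :=
  le_min (div_nonneg (sq_nonneg _) (by positivity)) (tsq_pos hK hn j).le

lemma tsq_eq_rpow (K : ℝ) (n j : ℕ) :
    (K * (n : ℝ) ^ (-(2:ℝ)/3) * 2 ^ ((j:ℝ)/2)) ^ 2 = tsq K n j := by
  have h2 : ((2:ℝ) ^ ((j:ℝ)/2)) ^ (2:ℕ) = (2:ℝ) ^ (j:ℕ) := by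
    rw [← Real.rpow_natCast ((2:ℝ) ^ ((j:ℝ)/2)) 2,
      ← Real.rpow_mul (by norm_num : (0:ℝ) ≤ 2)]
    rw [show ((j:ℝ)/2) * (2:ℕ) = (j:ℕ) by push_cast; ring]
    exact Real.rpow_natCast 2 j
  rw [mul_pow, h2, tsq]

lemma final_bound {K C₀ : ℝ} {m : ℝ → ℝ} {n : ℕ} (hK : 0 < K) (hn : 1 ≤ n)
    (hv : eVariationOn m (samplePts n) ≤ ENNReal.ofReal C₀) (hC₀ : 0 ≤ C₀) :
    tsq K n 0 * phi (vv m n 0 1 / tau K n 0) ≤ 4*K*C₀ * (n:ℝ) ^ (-(2:ℝ)/3) := by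
  have hN := npow_pos (n := n) hn
  have htau := tau_pos hK hn 0
  have hvle := vv_le hv hC₀ 0 1
  have hvnn := vv_nonneg m n 0 1
  have h1 : phi (vv m n 0 1 / tau K n 0) ≤ 4*(vv m n 0 1 / tau K n 0) :=
    phi_le (div_nonneg hvnn htau.le)
  calc tsq K n 0 * phi (vv m n 0 1 / tau K n 0)
      ≤ tsq K n 0 * (4*(vv m n 0 1 / tau K n 0)) :=
        mul_le_mul_of_nonneg_left h1 (tsq_pos hK hn 0).le
    _ = 4*K*(n:ℝ)^(-(2:ℝ)/3)*vv m n 0 1 := by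
        unfold tsq tau
        have hKN : K * (n:ℝ)^(-(2:ℝ)/3) ≠ 0 := by positivity
        field_simp
    _ ≤ 4*K*C₀ * (n:ℝ)^(-(2:ℝ)/3) := by
        have := mul_le_mul_of_nonneg_left hvle
          (by positivity : (0:ℝ) ≤ 4*K*(n:ℝ)^(-(2:ℝ)/3))
        nlinarith [this]

end Stmt17

/-- Lemma 4.1: if `TV(m₀; {x_1,…,x_n}) ≤ C₀` and `t_{n,j} = K n^{−2/3} 2^{j/2}`, then
`S_n(m₀) = Σ_{j : 2^j ≥ n^{1/3}} Σ_{k : (j,k) ∈ 𝓘_n} min{(β⁰_{j,k})², t_{n,j}²} ≤ C n^{−2/3}`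
for a constant `C` depending only on `C₀` and `K`.  (Any `(j,k) ∈ 𝓘_n` satisfies `j < n` and
`k ≤ 2^n`, so the finite sum below ranges over all of `𝓘_n`.) -/
theorem stmt_17 (C₀ K : ℝ) (hC₀ : 0 < C₀) (hK : 0 < K) :
    ∃ C : ℝ, 0 < C ∧
      ∀ (n : ℕ), 1 ≤ n → ∀ (m₀ : ℝ → ℝ),
        eVariationOn m₀ (samplePts n) ≤ ENNReal.ofReal C₀ →
        ∑ p ∈ (Finset.range n ×ˢ Finset.Icc 1 (2 ^ n)).filter
            (fun p => p.2 ≤ 2 ^ p.1 ∧ 1 ≤ cnt n (p.1 + 1) (2 * p.2 - 1) ∧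
              1 ≤ cnt n (p.1 + 1) (2 * p.2) ∧ (n : ℝ) ^ ((1 : ℝ) / 3) ≤ 2 ^ p.1),
            min ((betaCoef n p.1 p.2 m₀) ^ 2)
              ((K * (n : ℝ) ^ (-(2 : ℝ) / 3) * 2 ^ ((p.1 : ℝ) / 2)) ^ 2)
          ≤ C * (n : ℝ) ^ (-(2 : ℝ) / 3) := by
  classical
  refine ⟨4*K*C₀, by positivity, ?_⟩
  intro n hn m₀ hvar
  have hfin : eVariationOn m₀ (samplePts n) ≠ ⊤ :=
    ne_top_of_le_ne_top ENNReal.ofReal_ne_top hvar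
  have hC₀' : (0:ℝ) ≤ C₀ := hC₀.le
  set s := (Finset.range n ×ˢ Finset.Icc 1 (2 ^ n)).filter
      (fun p : ℕ × ℕ => p.2 ≤ 2 ^ p.1 ∧ 1 ≤ cnt n (p.1 + 1) (2 * p.2 - 1) ∧
        1 ≤ cnt n (p.1 + 1) (2 * p.2) ∧ (n : ℝ) ^ ((1 : ℝ) / 3) ≤ 2 ^ p.1) with hsdef
  have hterm : ∀ p ∈ s, min ((betaCoef n p.1 p.2 m₀) ^ 2)
      ((K * (n : ℝ) ^ (-(2 : ℝ) / 3) * 2 ^ ((p.1 : ℝ) / 2)) ^ 2)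
      ≤ Stmt17.gg K m₀ n p.1 p.2 := by
    intro p hp
    rw [hsdef, Finset.mem_filter] at hp
    obtain ⟨hmem, hk2, hc1, hc2, hpow⟩ := hp
    have hk1 : 1 ≤ p.2 := (Finset.mem_Icc.1 (Finset.mem_product.1 hmem).2).1
    rw [Stmt17.tsq_eq_rpow K n p.1]
    exact min_le_min (Stmt17.beta_sq_le hn hk1 hc1 hc2 hfin) le_rfl
  set T := (Finset.range (n+1) ×ˢ Finset.Icc 1 (2 ^ n)).filter
      (fun q : ℕ × ℕ => q.2 ≤ 2 ^ q.1) with hTdef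
  have hsub : s ⊆ T := by
    intro p hp
    rw [hsdef, Finset.mem_filter] at hp
    obtain ⟨hmem, hk2, _⟩ := hp
    rw [hTdef, Finset.mem_filter]
    rw [Finset.mem_product] at hmem ⊢
    exact ⟨⟨Finset.mem_range.2 (Nat.lt_succ_of_lt (Finset.mem_range.1 hmem.1)), hmem.2⟩, hk2⟩
  have hTsum : ∑ q ∈ T, Stmt17.gg K m₀ n q.1 q.2
      = ∑ d ∈ Finset.range (n+1), ∑ k ∈ Finset.Ioc 0 (2^d), Stmt17.gg K m₀ n d k := by
    rw [hTdef, Finset.sum_filter, Finset.sum_product]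
    apply Finset.sum_congr rfl
    intro d hd
    rw [← Finset.sum_filter]
    congr 1
    ext x
    simp only [Finset.mem_filter, Finset.mem_Icc, Finset.mem_Ioc]
    constructor
    · rintro ⟨⟨h1, h2⟩, h3⟩; omega
    · rintro ⟨h1, h2⟩
      have hdn : 2^d ≤ 2^n :=
        Nat.pow_le_pow_right (by norm_num) (Nat.lt_succ_iff.1 (Finset.mem_range.1 hd))
      omega
  have hexp : Stmt17.TS K m₀ n n 0 1
      = ∑ d ∈ Finset.range (n+1), ∑ k ∈ Finset.Ioc 0 (2^d), Stmt17.gg K m₀ n d k := by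
    rw [Stmt17.TS_expand K m₀ n n 0 1 le_rfl]
    apply Finset.sum_congr rfl
    intro d _
    simp
  calc ∑ p ∈ s, min ((betaCoef n p.1 p.2 m₀) ^ 2)
        ((K * (n : ℝ) ^ (-(2 : ℝ) / 3) * 2 ^ ((p.1 : ℝ) / 2)) ^ 2)
      ≤ ∑ p ∈ s, Stmt17.gg K m₀ n p.1 p.2 := Finset.sum_le_sum hterm
    _ ≤ ∑ q ∈ T, Stmt17.gg K m₀ n q.1 q.2 :=
        Finset.sum_le_sum_of_subset_of_nonneg hsub
          (fun q _ _ => Stmt17.gg_nonneg K m₀ n q.1 q.2 hK hn)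
    _ = Stmt17.TS K m₀ n n 0 1 := by rw [hTsum, hexp]
    _ ≤ Stmt17.tsq K n 0 * Stmt17.phi (Stmt17.vv m₀ n 0 1 / Stmt17.tau K n 0) :=
        Stmt17.TS_le hK hn hfin n 0 1 le_rfl
    _ ≤ 4*K*C₀ * (n : ℝ) ^ (-(2 : ℝ) / 3) := Stmt17.final_bound hK hn hvar hC₀'
end
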